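/- arXiv:math/0405080 — 7 statements merged into one kernel-verified Lean document; each statement's English description precedes it below -/
import Mathlib

section
/- Let G be a graph with n vertices, m edges, and degree sequence d(1), ..., d(n). Then (6·k₃(G) − Σ_{i=1}^{n} d(i)² + n·m) · bk(G) ≥ n·k₃(G) + 8·k₄(G) + 2·k₄^{(3)}(G). -/
open Finset
open scoped Classical

/-- The booksize of `G`: the maximum over edges `uv` of `G` of the number of
common neighbors of `u` and `v` (`0` if `G` has no edges). -/
noncomputable def bk {V : Type*} [Fintype V] (G : SimpleGraph V) : ℕ :=
  (Finset.univ.filter fun p : V × V => G.Adj p.1 p.2).sup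
    fun p => (G.neighborSet p.1 ∩ G.neighborSet p.2).ncard

/-- The number of `s`-cliques of `G`. -/
noncomputable def cliqueCount {V : Type*} [Fintype V] (G : SimpleGraph V) (s : ℕ) : ℕ :=
  (G.cliqueFinset s).card

/-- The number of induced subgraphs of `G` isomorphic to `H`. -/
noncomputable def inducedCopies {V W : Type*} [Fintype V] (G : SimpleGraph V)
    (H : SimpleGraph W) : ℕ :=
  {s : Set V | Nonempty (G.induce s ≃g H)}.ncard

/-- `K4j j` is the graph `K₄^(j)`: a triangle on `{0,1,2}` together with the vertex `3`
joined to precisely `3 - j` of its vertices. -/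
def K4j (j : ℕ) : SimpleGraph (Fin 4) :=
  SimpleGraph.fromRel fun a b => (a.val < 3 ∧ b.val < 3) ∨ (a.val = 3 ∧ b.val < 3 - j)

/-- The codegree function `d̂`, as a function on unordered pairs. -/
noncomputable def codegSym {V : Type*} [Fintype V] (G : SimpleGraph V) : Sym2 V → ℕ :=
  Sym2.lift ⟨fun u v => (G.neighborSet u ∩ G.neighborSet v).ncard,
    fun u v => by simp [Set.inter_comm]⟩

/-- `|Γ'(u) ∩ Γ'(v)|`, where `Γ'(x) = V ∖ Γ(x)`, as a function on unordered pairs. -/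
noncomputable def noncodegSym {V : Type*} [Fintype V] (G : SimpleGraph V) : Sym2 V → ℕ :=
  Sym2.lift ⟨fun u v => ((G.neighborSet u)ᶜ ∩ (G.neighborSet v)ᶜ).ncard,
    fun u v => by simp [Set.inter_comm]⟩

/-!
Let `x` be a vertex adjacent to exactly `j` vertices of a triangle `s`. Among the three edges of
`s`, exactly `C(j,2) + C(3-j,2)` have `x` as a common neighbour or as a common non-neighbour of
their ends. This number is at least `1`, and it is `3` when `j = 3` or `j = 0`. Summing over `x`
and `s` gives at least `n·k₃ + 2·4·k₄ + 2·k₄⁽³⁾`: a `K₄` contains four triangles, and an induced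
triangle with an isolated vertex comes from exactly one pair `(s, x)`. Grouped by edge `e`, the
same sum is `∑ₑ d̂(e)(d̂(e) + d̂'(e)) ≤ bk(G) ∑ₑ (d̂(e) + d̂'(e))`, where `d̂(e)` and `d̂'(e)` count
the common neighbours and the common non-neighbours of the ends of `e`. Inclusion–exclusion on
each edge gives `∑ₑ (d̂(e) + d̂'(e)) = 6k₃ - ∑ d(i)² + n·m`.

Edges are treated as 2-cliques. Then one double-counting identity between `(n+1)`-cliques and their
`n`-subsets gives the number of triangles through each edge, the number of `K₄`s on each triangle,
and the degree sums.
-/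

namespace Finset

lemma filter_powersetCard_subset_eq_powersetCard_inter {α : Type*} (k : ℕ) (s A : Finset α) :
    {u ∈ s.powersetCard k | u ⊆ A} = (s ∩ A).powersetCard k := by
  ext u
  simp only [mem_filter, mem_powersetCard, subset_inter_iff]
  tauto

lemma sum_card_filter_subset_powersetCard {α β : Type*} [Fintype β] (k : ℕ) (s : Finset α)
    (A : β → Finset α) :
    ∑ t ∈ s.powersetCard k, #{x | t ⊆ A x} = ∑ x, (#(s ∩ A x)).choose k := by
  simp only [card_filter]
  rw [sum_comm]
  simp only [← card_filter, filter_powersetCard_subset_eq_powersetCard_inter, card_powersetCard]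

lemma one_add_le_choose_two_add_choose_two {α : Type*} [Fintype α] {s : Finset α}
    (hs : #s = 3) (A : Finset α) :
    1 + 2 * (if s ⊆ A then 1 else 0) + 2 * (if s ⊆ Aᶜ then 1 else 0) ≤
      (#(s ∩ A)).choose 2 + (#(s ∩ Aᶜ)).choose 2 := by
  have hsum : #(s ∩ A) + #(s ∩ Aᶜ) = 3 := by
    rw [← sdiff_eq_inter_compl, card_inter_add_card_sdiff, hs]
  have hA : s ⊆ A → #(s ∩ A) = 3 := fun h => by rw [inter_eq_left.2 h, hs]
  have hAc : s ⊆ Aᶜ → #(s ∩ Aᶜ) = 3 := fun h => by rw [inter_eq_left.2 h, hs]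
  obtain h | h | h | h : #(s ∩ A) = 0 ∨ #(s ∩ A) = 1 ∨ #(s ∩ A) = 2 ∨ #(s ∩ A) = 3 := by omega
  all_goals
    rw [h, show #(s ∩ Aᶜ) = 3 - #(s ∩ A) by omega, h]
    split_ifs <;> simp_all

end Finset

namespace SimpleGraph

variable {V : Type*} {G : SimpleGraph V}

lemma exists_adj_of_mem {s : Finset V} (hs : G.IsClique s) (hcard : 1 < #s) {x : V}
    (hx : x ∈ s) : ∃ y ∈ s, G.Adj x y := by
  obtain ⟨y, hy, hyx⟩ := exists_mem_ne hcard x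
  exact ⟨y, hy, hs hx hy hyx.symm⟩

lemma setOf_nonempty_induce_iso_eq_range {W : Type*} (H : SimpleGraph W) :
    {A : Set V | Nonempty (G.induce A ≃g H)} = Set.range fun f : H ↪g G => Set.range f := by
  ext A
  constructor
  · rintro ⟨φ⟩
    refine ⟨(Embedding.induce A).comp φ.symm.toEmbedding, ?_⟩
    simp only [Embedding.coe_comp, Set.range_comp, RelIso.coe_toRelEmbedding,
      EquivLike.range_eq_univ, Set.image_univ]
    exact Subtype.range_coe
  · rintro ⟨f, rfl⟩
    exact ⟨f.isoInduceRange.symm⟩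

lemma range_K4j_three_embedding (f : K4j 3 ↪g G) :
    Set.range f = ↑(insert (f 3) ({f 0, f 1, f 2} : Finset V)) := by
  ext y
  simp only [Set.mem_range, Fin.exists_fin_succ, IsEmpty.exists_iff, or_false, coe_insert,
    coe_singleton, Set.mem_insert_iff, Set.mem_singleton_iff]
  tauto

variable [Fintype V]

variable (G) in
noncomputable def commonNeighborFinset (t : Finset V) : Finset V :=
  {x | ∀ y ∈ t, G.Adj x y}

variable (G) in
noncomputable def commonNonNeighborFinset (t : Finset V) : Finset V :=
  {x | ∀ y ∈ t, ¬G.Adj x y}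

lemma mem_commonNeighborFinset {t : Finset V} {x : V} :
    x ∈ G.commonNeighborFinset t ↔ ∀ y ∈ t, G.Adj x y := by
  simp [commonNeighborFinset]

lemma mem_commonNonNeighborFinset {t : Finset V} {x : V} :
    x ∈ G.commonNonNeighborFinset t ↔ ∀ y ∈ t, ¬G.Adj x y := by
  simp [commonNonNeighborFinset]

lemma image_insert_commonNeighborFinset {n : ℕ} {t : Finset V} (ht : G.IsNClique n t) :
    (G.commonNeighborFinset t).image (insert · t) = {s ∈ G.cliqueFinset (n + 1) | t ⊆ s} := by
  ext s
  simp only [mem_image, mem_filter, mem_cliqueFinset_iff, mem_commonNeighborFinset]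
  constructor
  · rintro ⟨x, hx, rfl⟩
    exact ⟨ht.insert hx, subset_insert x t⟩
  · rintro ⟨hs, hts⟩
    obtain ⟨x, hxt, rfl⟩ := Finset.exists_eq_insert_iff.2 ⟨hts, by rw [ht.card_eq, hs.card_eq]⟩
    exact ⟨x, fun y hy => hs.isClique (mem_insert_self x t) (mem_insert_of_mem hy)
      (ne_of_mem_of_not_mem hy hxt).symm, rfl⟩

lemma card_filter_cliqueFinset_succ_superset {n : ℕ} {t : Finset V} (ht : G.IsNClique n t) :
    #{s ∈ G.cliqueFinset (n + 1) | t ⊆ s} = #(G.commonNeighborFinset t) := by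
  rw [← image_insert_commonNeighborFinset ht, card_image_of_injOn]
  intro x hx y _ (hxy : insert x t = insert y t)
  have hxt : x ∉ t := fun h => G.irrefl (mem_commonNeighborFinset.1 hx x h)
  exact (mem_insert.1 (hxy ▸ mem_insert_self x t)).resolve_right hxt

theorem sum_cliqueFinset_succ_sum_powersetCard {M : Type*} [AddCommMonoid M] (n : ℕ)
    (f : Finset V → M) :
    ∑ s ∈ G.cliqueFinset (n + 1), ∑ t ∈ s.powersetCard n, f t =
      ∑ t ∈ G.cliqueFinset n, #(G.commonNeighborFinset t) • f t := by
  rw [sum_comm' (t' := G.cliqueFinset n) (s' := fun t => {s ∈ G.cliqueFinset (n + 1) | t ⊆ s})]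
  · refine sum_congr rfl fun t ht => ?_
    rw [sum_const, card_filter_cliqueFinset_succ_superset (mem_cliqueFinset_iff.1 ht)]
  · intro s t
    simp only [mem_cliqueFinset_iff, mem_powersetCard, mem_filter]
    constructor
    · rintro ⟨hs, hts, htn⟩
      exact ⟨⟨hs, hts⟩, hs.isClique.subset hts, htn⟩
    · rintro ⟨⟨hs, hts⟩, -, htn⟩
      exact ⟨hs, hts, htn⟩

theorem sum_card_commonNeighborFinset_cliqueFinset (n : ℕ) :
    ∑ t ∈ G.cliqueFinset n, #(G.commonNeighborFinset t) = (n + 1) * #(G.cliqueFinset (n + 1)) := by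
  calc ∑ t ∈ G.cliqueFinset n, #(G.commonNeighborFinset t)
      = ∑ s ∈ G.cliqueFinset (n + 1), #(s.powersetCard n) := by
        simpa only [smul_eq_mul, mul_one, ← card_eq_sum_ones] using
          (G.sum_cliqueFinset_succ_sum_powersetCard n fun _ => (1 : ℕ)).symm
    _ = (n + 1) * #(G.cliqueFinset (n + 1)) := by
        rw [sum_congr rfl fun s hs => by
          rw [card_powersetCard, (mem_cliqueFinset_iff.1 hs).card_eq, Nat.choose_succ_self_right],
          sum_const, smul_eq_mul, mul_comm]

lemma sum_cliqueFinset_one {M : Type*} [AddCommMonoid M] (f : Finset V → M) :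
    ∑ t ∈ G.cliqueFinset 1, f t = ∑ v, f {v} := by
  have : G.cliqueFinset 1 = univ.map ⟨singleton, singleton_injective⟩ := by
    ext t; simp [isNClique_one, eq_comm]
  rw [this, sum_map]
  rfl

lemma card_commonNeighborFinset_singleton (v : V) :
    #(G.commonNeighborFinset {v}) = G.degree v := by
  rw [← card_neighborFinset_eq_degree]
  congr 1
  ext x
  simp [mem_commonNeighborFinset, adj_comm]

lemma card_cliqueFinset_two : #(G.cliqueFinset 2) = #G.edgeFinset := by
  have h : ∑ t ∈ G.cliqueFinset 1, #(G.commonNeighborFinset t) = 2 * #(G.cliqueFinset 2) :=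
    G.sum_card_commonNeighborFinset_cliqueFinset 1
  rw [sum_cliqueFinset_one] at h
  simp only [card_commonNeighborFinset_singleton, sum_degrees_eq_twice_card_edges] at h
  omega

lemma sum_cliqueFinset_two_sum_degree :
    ∑ t ∈ G.cliqueFinset 2, ∑ y ∈ t, G.degree y = ∑ v, G.degree v ^ 2 := by
  have h := G.sum_cliqueFinset_succ_sum_powersetCard 1 fun t => ∑ y ∈ t, G.degree y
  simp only [powersetCard_one, sum_map, sum_cliqueFinset_one, sum_singleton] at h
  simpa [card_commonNeighborFinset_singleton, sq] using h

lemma commonNeighborFinset_eq_filter_subset (t : Finset V) :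
    G.commonNeighborFinset t = ({x | t ⊆ G.neighborFinset x} : Finset V) := by
  simp [commonNeighborFinset, subset_iff]

lemma commonNonNeighborFinset_eq_filter_subset (t : Finset V) :
    G.commonNonNeighborFinset t = ({x | t ⊆ (G.neighborFinset x)ᶜ} : Finset V) := by
  simp [commonNonNeighborFinset, subset_iff]

lemma card_add_le_sum_powersetCard_two {s : Finset V} (hs : #s = 3) :
    Fintype.card V + 2 * #(G.commonNeighborFinset s) + 2 * #(G.commonNonNeighborFinset s) ≤
      ∑ t ∈ s.powersetCard 2, (#(G.commonNeighborFinset t) + #(G.commonNonNeighborFinset t)) := by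
  rw [sum_add_distrib]
  simp only [commonNeighborFinset_eq_filter_subset, commonNonNeighborFinset_eq_filter_subset]
  rw [sum_card_filter_subset_powersetCard, sum_card_filter_subset_powersetCard,
    ← sum_add_distrib, card_filter, card_filter, mul_sum, mul_sum, ← card_univ, card_eq_sum_ones,
    ← sum_add_distrib, ← sum_add_distrib]
  exact sum_le_sum fun x _ => one_add_le_choose_two_add_choose_two hs _

lemma mem_cliqueFinset_and_mem_commonNonNeighborFinset_of_K4j_three_embedding (f : K4j 3 ↪g G) :
    ({f 0, f 1, f 2} : Finset V) ∈ G.cliqueFinset 3 ∧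
      f 3 ∈ G.commonNonNeighborFinset {f 0, f 1, f 2} := by
  simp only [mem_cliqueFinset_iff, is3Clique_triple_iff, mem_commonNonNeighborFinset,
    mem_insert, mem_singleton, forall_eq_or_imp, forall_eq, f.map_adj_iff]
  simp [K4j]

lemma exists_K4j_three_embedding {s : Finset V} {x : V} (hs : s ∈ G.cliqueFinset 3)
    (hx : x ∈ G.commonNonNeighborFinset s) :
    ∃ f : K4j 3 ↪g G, Set.range f = ↑(insert x s) := by
  obtain ⟨a, b, c, hab, hac, hbc, rfl⟩ := is3Clique_iff.1 (mem_cliqueFinset_iff.1 hs)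
  simp only [mem_commonNonNeighborFinset, mem_insert, mem_singleton, forall_eq_or_imp,
    forall_eq] at hx
  obtain ⟨hxa, hxb, hxc⟩ := hx
  have hxa' : x ≠ a := fun h => hxb (h ▸ hab)
  have hxb' : x ≠ b := fun h => hxa (h ▸ hab.symm)
  have hxc' : x ≠ c := fun h => hxa (h ▸ hac.symm)
  have hinj : Function.Injective ![a, b, c, x] := by
    intro i j
    fin_cases i <;> fin_cases j <;>
      simp [hab.ne, hac.ne, hbc.ne, hab.ne', hac.ne', hbc.ne', hxa', hxb', hxc', hxa'.symm,
        hxb'.symm, hxc'.symm]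
  let f : K4j 3 ↪g G := ⟨⟨![a, b, c, x], hinj⟩, fun {i j} => by
    fin_cases i <;> fin_cases j <;> simp [K4j, hab, hac, hbc, hxa, hxb, hxc, adj_comm]⟩
  exact ⟨f, range_K4j_three_embedding f⟩

lemma notMem_of_mem_commonNonNeighborFinset {s : Finset V} (hs : G.IsClique s) (hcard : 1 < #s)
    {x : V} (hx : x ∈ G.commonNonNeighborFinset s) : x ∉ s := fun hxs => by
  obtain ⟨y, hy, hxy⟩ := exists_adj_of_mem hs hcard hxs
  exact mem_commonNonNeighborFinset.1 hx y hy hxy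

lemma injOn_insert_sigma_commonNonNeighborFinset :
    Set.InjOn (fun p : (_ : Finset V) × V => insert p.2 p.1)
      ((G.cliqueFinset 3).sigma G.commonNonNeighborFinset) := by
  rintro ⟨s, x⟩ hp ⟨s', x'⟩ hp' heq
  simp only [coe_sigma, Set.mem_sigma_iff, mem_coe, mem_cliqueFinset_iff] at hp hp' heq
  have hcard : 1 < #s' := by rw [hp'.1.card_eq]; norm_num
  have hxs' : x ∉ s' := fun hxs' => by
    obtain ⟨z, hz, hxz⟩ := exists_adj_of_mem hp'.1.isClique hcard hxs'
    rcases mem_insert.1 (heq ▸ mem_insert_of_mem hz : z ∈ insert x s) with rfl | hzs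
    · exact G.irrefl hxz
    · exact mem_commonNonNeighborFinset.1 hp.2 z hzs hxz
  obtain rfl : x = x' := (mem_insert.1 (heq ▸ mem_insert_self x s)).resolve_right hxs'
  have hxs : x ∉ s :=
    notMem_of_mem_commonNonNeighborFinset hp.1.isClique (by rw [hp.1.card_eq]; norm_num) hp.2
  rw [← erase_insert hxs, heq, erase_insert hxs']

theorem sum_card_commonNonNeighborFinset_cliqueFinset_three :
    ∑ s ∈ G.cliqueFinset 3, #(G.commonNonNeighborFinset s) = inducedCopies G (K4j 3) := by
  have hrange : (Set.range fun f : K4j 3 ↪g G => Set.range f) =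
      (fun p : (_ : Finset V) × V => (↑(insert p.2 p.1) : Set V)) ''
        ↑((G.cliqueFinset 3).sigma G.commonNonNeighborFinset) := by
    ext A
    constructor
    · rintro ⟨f, rfl⟩
      exact ⟨⟨_, f 3⟩,
        mem_sigma.2 (mem_cliqueFinset_and_mem_commonNonNeighborFinset_of_K4j_three_embedding f),
        (range_K4j_three_embedding f).symm⟩
    · rintro ⟨⟨s, x⟩, hp, rfl⟩
      exact exists_K4j_three_embedding (mem_sigma.1 hp).1 (mem_sigma.1 hp).2
  rw [inducedCopies, setOf_nonempty_induce_iso_eq_range, hrange,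
    Set.InjOn.ncard_image
      (by exact coe_injective.comp_injOn injOn_insert_sigma_commonNonNeighborFinset),
    Set.ncard_coe_finset, card_sigma]

lemma card_commonNeighborFinset_le_bk {t : Finset V} (ht : t ∈ G.cliqueFinset 2) :
    #(G.commonNeighborFinset t) ≤ bk G := by
  obtain ⟨u, v, huv, rfl⟩ := card_eq_two.1 (mem_cliqueFinset_iff.1 ht).card_eq
  have hadj : G.Adj u v := (mem_cliqueFinset_iff.1 ht).isClique (by simp) (by simp) huv
  have hcn : G.neighborSet u ∩ G.neighborSet v = ↑(G.commonNeighborFinset {u, v}) := by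
    ext x; simp [mem_commonNeighborFinset, adj_comm]
  have := le_sup (s := {p : V × V | G.Adj p.1 p.2})
    (f := fun p => (G.neighborSet p.1 ∩ G.neighborSet p.2).ncard) (b := (u, v))
    (by simpa using hadj)
  rwa [hcn, Set.ncard_coe_finset] at this

lemma card_commonNonNeighborFinset_add_sum_degree {t : Finset V} (ht : t ∈ G.cliqueFinset 2) :
    #(G.commonNonNeighborFinset t) + ∑ y ∈ t, G.degree y =
      Fintype.card V + #(G.commonNeighborFinset t) := by
  obtain ⟨u, v, huv, rfl⟩ := card_eq_two.1 (mem_cliqueFinset_iff.1 ht).card_eq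
  have hcn : G.commonNeighborFinset {u, v} = G.neighborFinset u ∩ G.neighborFinset v := by
    ext x; simp [mem_commonNeighborFinset, adj_comm]
  have hcnn : G.commonNonNeighborFinset {u, v} = (G.neighborFinset u ∪ G.neighborFinset v)ᶜ := by
    ext x; simp [mem_commonNonNeighborFinset, adj_comm]
  rw [hcn, hcnn, sum_pair huv, ← card_neighborFinset_eq_degree, ← card_neighborFinset_eq_degree,
    ← card_union_add_card_inter, ← add_assoc, card_compl_add_card]

theorem card_mul_card_cliqueFinset_three_add_le :
    Fintype.card V * #(G.cliqueFinset 3) + 8 * #(G.cliqueFinset 4) +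
        2 * inducedCopies G (K4j 3) ≤
      (∑ t ∈ G.cliqueFinset 2, (#(G.commonNeighborFinset t) + #(G.commonNonNeighborFinset t))) *
        bk G :=
  calc Fintype.card V * #(G.cliqueFinset 3) + 8 * #(G.cliqueFinset 4) +
        2 * inducedCopies G (K4j 3)
      = ∑ s ∈ G.cliqueFinset 3, (Fintype.card V + 2 * #(G.commonNeighborFinset s) +
          2 * #(G.commonNonNeighborFinset s)) := by
        rw [sum_add_distrib, sum_add_distrib, sum_const, smul_eq_mul, ← mul_sum, ← mul_sum,
          sum_card_commonNeighborFinset_cliqueFinset,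
          sum_card_commonNonNeighborFinset_cliqueFinset_three]
        ring
    _ ≤ ∑ s ∈ G.cliqueFinset 3, ∑ t ∈ s.powersetCard 2,
          (#(G.commonNeighborFinset t) + #(G.commonNonNeighborFinset t)) :=
        sum_le_sum fun s hs => card_add_le_sum_powersetCard_two (mem_cliqueFinset_iff.1 hs).card_eq
    _ = ∑ t ∈ G.cliqueFinset 2, #(G.commonNeighborFinset t) *
          (#(G.commonNeighborFinset t) + #(G.commonNonNeighborFinset t)) :=
        G.sum_cliqueFinset_succ_sum_powersetCard 2 _
    _ ≤ ∑ t ∈ G.cliqueFinset 2, bk G *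
          (#(G.commonNeighborFinset t) + #(G.commonNonNeighborFinset t)) :=
        sum_le_sum fun t ht => Nat.mul_le_mul_right _ (card_commonNeighborFinset_le_bk ht)
    _ = _ := by rw [← mul_sum, mul_comm]

theorem sum_card_commonNeighborFinset_add_card_commonNonNeighborFinset :
    (∑ t ∈ G.cliqueFinset 2, (#(G.commonNeighborFinset t) + #(G.commonNonNeighborFinset t)) : ℤ) =
      6 * #(G.cliqueFinset 3) - ∑ v, (G.degree v : ℤ) ^ 2 +
        Fintype.card V * #G.edgeFinset := by
  have hcn : ∑ t ∈ G.cliqueFinset 2, #(G.commonNeighborFinset t) = 3 * #(G.cliqueFinset 3) :=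
    G.sum_card_commonNeighborFinset_cliqueFinset 2
  have hcnn : ∑ t ∈ G.cliqueFinset 2, #(G.commonNonNeighborFinset t) + ∑ v, G.degree v ^ 2 =
      Fintype.card V * #G.edgeFinset + 3 * #(G.cliqueFinset 3) := by
    rw [← sum_cliqueFinset_two_sum_degree, ← sum_add_distrib,
      sum_congr rfl fun t ht => card_commonNonNeighborFinset_add_sum_degree ht, sum_add_distrib,
      sum_const, smul_eq_mul, card_cliqueFinset_two, hcn, mul_comm]
  zify at hcn hcnn
  push_cast [sum_add_distrib]
  linarith

end SimpleGraph

theorem stmt0 {V : Type*} [Fintype V] (G : SimpleGraph V) (n m : ℕ)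
    (hn : n = Fintype.card V) (hm : m = G.edgeFinset.card) :
    (6 * (cliqueCount G 3 : ℤ) - ∑ i : V, (G.degree i : ℤ) ^ 2 + (n : ℤ) * m) * bk G ≥
      (n : ℤ) * cliqueCount G 3 + 8 * cliqueCount G 4 + 2 * inducedCopies G (K4j 3) := by
  subst hn hm
  rw [ge_iff_le, cliqueCount, cliqueCount,
    ← SimpleGraph.sum_card_commonNeighborFinset_add_card_commonNonNeighborFinset]
  exact_mod_cast G.card_mul_card_cliqueFinset_three_add_le
end

section
/- For every graph G with n vertices and m edges satisfying m > n²/4, one has bk(G) ≥ 2m/n − n/3. -/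
open Finset
open scoped Classical

private lemma bookArith (n m P N2 SD b : ℝ)
    (rident : P + n * (2 * m) = 2 * SD + N2)
    (rkey : n * P ≤ 3 * (b * (P + N2)))
    (rPle : P ≤ 2 * m * b)
    (rP0 : 0 ≤ P) (rN20 : 0 ≤ N2) (rb0 : 0 ≤ b)
    (rm1 : (1:ℝ) ≤ m) (rn1 : (1:ℝ) ≤ n)
    (rcauchy : (2*m)^2 ≤ n * SD)
    (h4m : n^2 < 4*m) :
    2 * m / n - n / 3 ≤ b := by
  have hnS : 4 * m^2 - n^2 * m ≤ n * (SD - n * m) := by nlinarith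
  have hSpos : 0 < SD - n * m := by nlinarith
  have hPN : P + N2 = 2 * P - 2 * (SD - n * m) := by linarith
  have hP2S : 2 * (SD - n * m) ≤ P := by linarith
  have hbpos : 0 < b := by
    rcases lt_or_eq_of_le rb0 with hb' | hb'
    · exact hb'
    · exfalso
      rw [← hb'] at rkey
      nlinarith
  have h6bS : 6 * b * (SD - n * m) ≤ (6 * b - n) * P := by nlinarith [rkey, hPN]
  have h6bn : 0 < 6 * b - n := by
    by_contra hc
    push_neg at hc
    nlinarith
  have h6S : 6 * (SD - n * m) ≤ (6 * b - n) * (2 * m) := by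
    have := h6bS.trans (by nlinarith [rPle] : (6 * b - n) * P ≤ (6 * b - n) * (2 * m * b))
    nlinarith
  have hgoal : 6 * m - n^2 ≤ 3 * n * b := by nlinarith [h6S, hnS]
  have hn0 : (0:ℝ) < n := by linarith
  rw [sub_le_iff_le_add, div_le_iff₀ hn0]
  nlinarith [hgoal]

theorem stmt1 {V : Type*} [Fintype V] (G : SimpleGraph V) (n m : ℕ)
    (hn : n = Fintype.card V) (hm : m = G.edgeFinset.card)
    (h : (m : ℝ) > (n : ℝ) ^ 2 / 4) :
    (bk G : ℝ) ≥ 2 * m / n - n / 3 := by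
  classical
  -- abbreviations
  set nf : V → Finset V := fun v => G.neighborFinset v with hnf
  set d : V → ℕ := fun v => G.degree v with hd
  set cF : V → V → ℕ := fun u v => (nf u ∩ nf v).card with hcF
  set qF : V → V → ℕ := fun u v => ((nf u)ᶜ ∩ (nf v)ᶜ).card with hqF
  set S2 : (V → V → ℕ) → ℕ := fun f => ∑ u, ∑ v, if G.Adj u v then f u v else 0 with hS2
  set T3 : (V → V → ℕ) → ℕ :=
    fun f => ∑ u, ∑ v, ∑ w, if G.Adj u v ∧ G.Adj u w ∧ G.Adj v w then f u v else 0 with hT3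
  -- basic positivity
  have hm1 : 1 ≤ m := by
    by_contra hc
    push_neg at hc
    have : m = 0 := by omega
    rw [this] at h
    push_cast at h
    nlinarith [sq_nonneg (n : ℝ)]
  have hVne : Nonempty V := by
    obtain ⟨e, he⟩ := Finset.card_pos.mp (show 0 < G.edgeFinset.card by omega)
    exact ⟨e.out.1⟩
  have hn1 : 1 ≤ n := by rw [hn]; exact Fintype.card_pos
  -- sum manipulation helpers
  have hS2add : ∀ f g : V → V → ℕ, S2 (fun u v => f u v + g u v) = S2 f + S2 g := by
    intro f g
    rw [hS2]
    simp only
    rw [← Finset.sum_add_distrib]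
    refine Finset.sum_congr rfl fun u _ => ?_
    rw [← Finset.sum_add_distrib]
    refine Finset.sum_congr rfl fun v _ => ?_
    split <;> simp
  have hS2mul : ∀ (k : ℕ) (f : V → V → ℕ), S2 (fun u v => k * f u v) = k * S2 f := by
    intro k f
    rw [hS2]
    simp only [Finset.mul_sum]
    refine Finset.sum_congr rfl fun u _ => Finset.sum_congr rfl fun v _ => ?_
    split <;> simp
  have hS2le : ∀ f g : V → V → ℕ, (∀ u v, G.Adj u v → f u v ≤ g u v) → S2 f ≤ S2 g := by
    intro f g hfg
    refine Finset.sum_le_sum fun u _ => Finset.sum_le_sum fun v _ => ?_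
    split
    · exact hfg u v (by assumption)
    · exact le_rfl
  -- counting common neighbours: inner sum collapse
  have hfilter : ∀ u v : V, (univ.filter fun w => G.Adj u w ∧ G.Adj v w) = nf u ∩ nf v := by
    intro u v
    ext w
    simp [hnf, SimpleGraph.mem_neighborFinset]
  have hinner : ∀ (u v : V) (c : ℕ),
      (∑ w, if G.Adj u w ∧ G.Adj v w then c else 0) = cF u v * c := by
    intro u v c
    rw [← Finset.sum_filter, hfilter, Finset.sum_const, smul_eq_mul]
  -- triple sum collapse
  have hcollapse : ∀ f : V → V → ℕ, T3 f = S2 (fun u v => cF u v * f u v) := by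
    intro f
    refine Finset.sum_congr rfl fun u _ => Finset.sum_congr rfl fun v _ => ?_
    by_cases huv : G.Adj u v
    · simp only [huv, true_and, if_true]
      exact hinner u v (f u v)
    · simp [huv]
  -- symmetry of the triple sum
  have hsym2 : ∀ f : V → V → ℕ, (∀ a b, f a b = f b a) →
      (∑ u, ∑ v, ∑ w, if G.Adj u v ∧ G.Adj u w ∧ G.Adj v w then f u w else 0) = T3 f := by
    intro f hf
    rw [hT3]
    refine Finset.sum_congr rfl fun u _ => ?_
    rw [Finset.sum_comm]
    refine Finset.sum_congr rfl fun v _ => Finset.sum_congr rfl fun w _ => ?_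
    -- goal: ite (Adj u w ∧ Adj u v ∧ Adj w v) (f u v) 0 = ite (Adj u v ∧ Adj u w ∧ Adj v w) (f u v) 0
    refine if_congr ?_ rfl rfl
    constructor
    · rintro ⟨h1, h2, h3⟩; exact ⟨h2, h1, h3.symm⟩
    · rintro ⟨h1, h2, h3⟩; exact ⟨h2, h1, h3.symm⟩
  have hsym3 : ∀ f : V → V → ℕ, (∀ a b, f a b = f b a) →
      (∑ u, ∑ v, ∑ w, if G.Adj u v ∧ G.Adj u w ∧ G.Adj v w then f v w else 0) = T3 f := by
    intro f hf
    rw [hT3]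
    rw [Finset.sum_comm]
    refine Finset.sum_congr rfl fun u _ => ?_
    rw [Finset.sum_comm]
    refine Finset.sum_congr rfl fun v _ => Finset.sum_congr rfl fun w _ => ?_
    -- after reindexing goal: ite (Adj w u ∧ Adj w v ∧ Adj u v) (f u v) 0 = ite (tri u v w) (f u v) 0
    refine if_congr ?_ rfl rfl
    constructor
    · rintro ⟨h1, h2, h3⟩; exact ⟨h3, h1.symm, h2.symm⟩
    · rintro ⟨h1, h2, h3⟩; exact ⟨h2.symm, h3.symm, h1⟩
  -- number of ordered edges
  have hinner1 : ∀ u : V, (∑ v, if G.Adj u v then (1:ℕ) else 0) = d u := by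
    intro u
    rw [← Finset.sum_filter]
    rw [show (univ.filter fun v => G.Adj u v) = nf u by ext w; simp [hnf, SimpleGraph.mem_neighborFinset]]
    simp [hnf, hd]
  have hE2 : S2 (fun _ _ => 1) = 2 * m := by
    rw [hS2]
    simp only
    rw [Finset.sum_congr rfl fun u _ => hinner1 u]
    rw [hd, SimpleGraph.sum_degrees_eq_twice_card_edges, hm]
  -- degree sums
  have hdeg1 : S2 (fun u _ => d u) = ∑ u, d u * d u := by
    rw [hS2]
    refine Finset.sum_congr rfl fun u _ => ?_
    have : (∑ v, if G.Adj u v then d u else 0) = d u * (∑ v, if G.Adj u v then (1:ℕ) else 0) := by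
      rw [Finset.mul_sum]
      refine Finset.sum_congr rfl fun v _ => ?_
      split <;> simp
    rw [this, hinner1]
  have hdeg2 : S2 (fun _ v => d v) = ∑ u, d u * d u := by
    rw [hS2]
    simp only
    rw [Finset.sum_comm]
    rw [← hdeg1, hS2]
    refine Finset.sum_congr rfl fun u _ => Finset.sum_congr rfl fun v _ => ?_
    refine if_congr ⟨fun h' => h'.symm, fun h' => h'.symm⟩ rfl rfl
  -- the pointwise identity  cF u v + n = d u + d v + qF u v
  have hident : ∀ u v : V, cF u v + n = (d u + d v) + qF u v := by
    intro u v
    have h1 := Finset.card_inter_add_card_union (nf u) (nf v)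
    have h2 := Finset.card_add_card_compl (nf u ∪ nf v)
    have h3 : (nf u ∪ nf v)ᶜ = (nf u)ᶜ ∩ (nf v)ᶜ := Finset.compl_union _ _
    have h4 : (nf u).card = d u := rfl
    have h5 : (nf v).card = d v := rfl
    rw [h3] at h2
    rw [hcF, hqF, hn]
    simp only
    omega
  -- summed identity
  have hsumident : S2 cF + n * (2 * m) = 2 * (∑ u, d u * d u) + S2 qF := by
    have e1 : S2 (fun u v => cF u v + n * 1) = S2 (fun u v => (d u + d v) + qF u v) := by
      refine Finset.sum_congr rfl fun u _ => Finset.sum_congr rfl fun v _ => ?_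
      refine if_congr Iff.rfl ?_ rfl
      rw [mul_one]
      exact hident u v
    rw [hS2add, hS2mul, hE2] at e1
    rw [show (S2 fun u v => d u + d v + qF u v) = S2 (fun u v => (fun u v => d u + d v) u v + qF u v) from rfl] at e1
    rw [hS2add] at e1
    rw [show (S2 fun u v => d u + d v) = S2 (fun u v => (fun u v => d u) u v + (fun u v => d v) u v) from rfl] at e1
    rw [hS2add, hdeg1, hdeg2] at e1
    omega
  -- codegrees are bounded by the booksize
  have hble : ∀ u v : V, G.Adj u v → cF u v ≤ bk G := by
    intro u v huv
    have hmem : (u, v) ∈ univ.filter fun p : V × V => G.Adj p.1 p.2 := by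
      simp [huv]
    have hle := Finset.le_sup
      (f := fun p : V × V => (G.neighborSet p.1 ∩ G.neighborSet p.2).ncard) hmem
    have hcast : (G.neighborSet u ∩ G.neighborSet v).ncard = cF u v := by
      rw [hcF]
      simp only
      rw [← Set.ncard_coe_finset]
      congr 1
      rw [hnf]
      simp [Finset.coe_inter, SimpleGraph.neighborFinset_def, Set.coe_toFinset]
    rw [bk]
    exact hcast.symm.trans_le hle
  -- the per-triangle inequality
  have htri : ∀ u v w : V, G.Adj u v → G.Adj u w → G.Adj v w →
      n ≤ (cF u v + qF u v) + ((cF u w + qF u w) + (cF v w + qF v w)) := by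
    intro u v w huv huw hvw
    have hsub : (univ : Finset V) ⊆
        ((nf u ∩ nf v) ∪ ((nf u)ᶜ ∩ (nf v)ᶜ)) ∪
          (((nf u ∩ nf w) ∪ ((nf u)ᶜ ∩ (nf w)ᶜ)) ∪
            ((nf v ∩ nf w) ∪ ((nf v)ᶜ ∩ (nf w)ᶜ))) := by
      intro x _
      simp only [Finset.mem_union, Finset.mem_inter, Finset.mem_compl, hnf,
        SimpleGraph.mem_neighborFinset]
      tauto
    have hcard := Finset.card_le_card hsub
    rw [Finset.card_univ, ← hn] at hcard
    refine hcard.trans ?_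
    refine (Finset.card_union_le _ _).trans ?_
    have b1 : ((nf u ∩ nf v) ∪ ((nf u)ᶜ ∩ (nf v)ᶜ)).card ≤ cF u v + qF u v :=
      Finset.card_union_le _ _
    have b2 : (((nf u ∩ nf w) ∪ ((nf u)ᶜ ∩ (nf w)ᶜ)) ∪
        ((nf v ∩ nf w) ∪ ((nf v)ᶜ ∩ (nf w)ᶜ))).card ≤ (cF u w + qF u w) + (cF v w + qF v w) := by
      refine (Finset.card_union_le _ _).trans ?_
      exact Nat.add_le_add (Finset.card_union_le _ _) (Finset.card_union_le _ _)
    omega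
  -- key counting inequality:  n * S2 cF ≤ 3 * bk G * (S2 cF + S2 qF)
  set g : V → V → ℕ := fun u v => cF u v + qF u v with hg
  have hgsym : ∀ a b : V, g a b = g b a := by
    intro a b
    rw [hg, hcF, hqF]
    simp only
    rw [Finset.inter_comm (nf a) (nf b), Finset.inter_comm ((nf a)ᶜ) ((nf b)ᶜ)]
  have hkey : n * S2 cF ≤ 3 * (bk G * (S2 cF + S2 qF)) := by
    have step1 : n * S2 cF = T3 (fun _ _ => n) := by
      rw [hcollapse (fun _ _ => n)]
      rw [show (S2 fun u v => cF u v * n) = S2 (fun u v => n * cF u v) by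
        refine Finset.sum_congr rfl fun u _ => Finset.sum_congr rfl fun v _ => ?_
        refine if_congr Iff.rfl (mul_comm _ _) rfl]
      rw [hS2mul]
    have step2 : T3 (fun _ _ => n) ≤ T3 g +
        ((∑ u, ∑ v, ∑ w, if G.Adj u v ∧ G.Adj u w ∧ G.Adj v w then g u w else 0) +
         (∑ u, ∑ v, ∑ w, if G.Adj u v ∧ G.Adj u w ∧ G.Adj v w then g v w else 0)) := by
      rw [hT3]
      simp only
      rw [← Finset.sum_add_distrib, ← Finset.sum_add_distrib]
      refine Finset.sum_le_sum fun u _ => ?_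
      rw [← Finset.sum_add_distrib, ← Finset.sum_add_distrib]
      refine Finset.sum_le_sum fun v _ => ?_
      rw [← Finset.sum_add_distrib, ← Finset.sum_add_distrib]
      refine Finset.sum_le_sum fun w _ => ?_
      by_cases htriuvw : G.Adj u v ∧ G.Adj u w ∧ G.Adj v w
      · simp only [htriuvw, if_true]
        exact htri u v w htriuvw.1 htriuvw.2.1 htriuvw.2.2
      · simp [htriuvw]
    rw [hsym2 g hgsym, hsym3 g hgsym] at step2
    have step3 : T3 g ≤ bk G * (S2 cF + S2 qF) := by
      rw [hcollapse g]
      have : S2 (fun u v => cF u v * g u v) ≤ S2 (fun u v => bk G * g u v) := by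
        refine hS2le _ _ fun u v huv => ?_
        exact Nat.mul_le_mul_right _ (hble u v huv)
      refine this.trans ?_
      rw [hS2mul]
      rw [show S2 g = S2 cF + S2 qF from by rw [hg]; exact hS2add cF qF]
    calc n * S2 cF = T3 (fun _ _ => n) := step1
      _ ≤ T3 g + (T3 g + T3 g) := step2
      _ ≤ bk G * (S2 cF + S2 qF) + (bk G * (S2 cF + S2 qF) + bk G * (S2 cF + S2 qF)) := by
          exact Nat.add_le_add step3 (Nat.add_le_add step3 step3)
      _ = 3 * (bk G * (S2 cF + S2 qF)) := by ring
  -- P is bounded by 2 m * bk G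
  have hPle : S2 cF ≤ 2 * m * bk G := by
    have : S2 cF ≤ S2 (fun _ _ => bk G) := hS2le _ _ fun u v huv => hble u v huv
    refine this.trans ?_
    rw [show (S2 fun _ _ => bk G) = S2 (fun u v => bk G * 1) from by simp]
    rw [hS2mul, hE2, mul_comm]
  -- Cauchy-Schwarz: (2m)^2 ≤ n * ∑ d^2
  have hcauchy : ((2 * m : ℕ) : ℝ) ^ 2 ≤ (n : ℝ) * ((∑ u, d u * d u : ℕ) : ℝ) := by
    have hc := sq_sum_le_card_mul_sum_sq (s := (univ : Finset V)) (f := fun v => (d v : ℝ))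
    have hsd : (∑ v, (d v : ℝ)) = ((2 * m : ℕ) : ℝ) := by
      rw [← Nat.cast_sum]
      congr 1
      rw [hd, SimpleGraph.sum_degrees_eq_twice_card_edges, hm]
    have hsq : (∑ v, (d v : ℝ) ^ 2) = ((∑ u, d u * d u : ℕ) : ℝ) := by
      rw [Nat.cast_sum]
      refine Finset.sum_congr rfl fun v _ => ?_
      push_cast
      ring
    rw [hsd, hsq, Finset.card_univ, ← hn] at hc
    exact hc
  -- now pass to the reals and finish
  obtain ⟨P, hP⟩ : ∃ x : ℝ, x = ((S2 cF : ℕ) : ℝ) := ⟨_, rfl⟩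
  obtain ⟨N2, hN2⟩ : ∃ x : ℝ, x = ((S2 qF : ℕ) : ℝ) := ⟨_, rfl⟩
  obtain ⟨SD, hSD⟩ : ∃ x : ℝ, x = ((∑ u, d u * d u : ℕ) : ℝ) := ⟨_, rfl⟩
  obtain ⟨b, hb⟩ : ∃ x : ℝ, x = ((bk G : ℕ) : ℝ) := ⟨_, rfl⟩
  have rident : P + (n : ℝ) * (2 * m) = 2 * SD + N2 := by
    rw [hP, hN2, hSD]
    exact_mod_cast hsumident
  have rkey : (n : ℝ) * P ≤ 3 * (b * (P + N2)) := by
    rw [hP, hN2, hb]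
    exact_mod_cast hkey
  have rPle : P ≤ 2 * (m : ℝ) * b := by
    rw [hP, hb]
    exact_mod_cast hPle
  have rP0 : 0 ≤ P := by rw [hP]; exact Nat.cast_nonneg _
  have rN20 : 0 ≤ N2 := by rw [hN2]; exact Nat.cast_nonneg _
  have rb0 : 0 ≤ b := by rw [hb]; exact Nat.cast_nonneg _
  have rm1 : (1 : ℝ) ≤ m := by exact_mod_cast hm1
  have rn1 : (1 : ℝ) ≤ n := by exact_mod_cast hn1
  have rcauchy : (2 * (m:ℝ)) ^ 2 ≤ (n : ℝ) * SD := by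
    rw [hSD]
    push_cast at hcauchy ⊢
    exact hcauchy
  have h4m : (n : ℝ) ^ 2 < 4 * m := by linarith
  have final := bookArith (n : ℝ) (m : ℝ) P N2 SD b rident rkey rPle rP0 rN20 rb0 rm1 rn1
    rcauchy h4m
  rw [hb] at final
  exact final
end

section
/- Let t ≥ 1 and s > 3 be integers and n = 3st. Let H_{s,t} be the graph on n vertices obtained by partitioning the vertex set into 3s classes V_{ij} (i ∈ {1,2,3}, j ∈ {1,...,s}), each of size t, and joining u ∈ V_{ij} to v ∈ V_{kl} if and only if i ≠ k and j ≠ l. Then H_{s,t} has exactly 3s(s−1)t² = (s−1)n²/(3s) edges and bk(H_{s,t}) = (s−2)t = (s−2)n/(3s). -/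
open Finset
open scoped Classical

/-- The Erdős–Faudree–Rousseau graph `H_{s,t}`: vertices are triples `(i, j, a)` with
`i ∈ [3]`, `j ∈ [s]`, `a ∈ [t]` (so the class `V_{ij}` is `{i} × {j} × [t]`), and
`(i, j, a)` is joined to `(k, l, b)` iff `i ≠ k` and `j ≠ l`. -/
def Hst (s t : ℕ) : SimpleGraph (Fin 3 × Fin s × Fin t) where
  Adj u v := u.1 ≠ v.1 ∧ u.2.1 ≠ v.2.1
  symm := ⟨fun u v h => ⟨h.1.symm, h.2.symm⟩⟩
  loopless := ⟨fun u h => h.1 rfl⟩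

namespace SimpleGraph

variable {V : Type*} [Fintype V] {G : SimpleGraph V}

lemma bk_le_of_forall_adj {c : ℕ}
    (h : ∀ u v, G.Adj u v → (G.neighborSet u ∩ G.neighborSet v).ncard ≤ c) : bk G ≤ c :=
  Finset.sup_le fun p hp => h p.1 p.2 (Finset.mem_filter.1 hp).2

lemma ncard_inter_neighborSet_le_bk {u v : V} (h : G.Adj u v) :
    (G.neighborSet u ∩ G.neighborSet v).ncard ≤ bk G :=
  Finset.le_sup (f := fun p : V × V => (G.neighborSet p.1 ∩ G.neighborSet p.2).ncard)
    (Finset.mem_filter.2 ⟨Finset.mem_univ (u, v), h⟩)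

end SimpleGraph

open SimpleGraph

section Hst

variable {s t : ℕ}

lemma Hst_adj {u v : Fin 3 × Fin s × Fin t} : (Hst s t).Adj u v ↔ u.1 ≠ v.1 ∧ u.2.1 ≠ v.2.1 :=
  Iff.rfl

lemma Hst_neighborFinset (v : Fin 3 × Fin s × Fin t) :
    (Hst s t).neighborFinset v = {v.1}ᶜ ×ˢ {v.2.1}ᶜ ×ˢ univ := by
  ext w
  simp [Hst_adj, ne_comm]

lemma Hst_degree (v : Fin 3 × Fin s × Fin t) : (Hst s t).degree v = 2 * (s - 1) * t := by
  rw [← card_neighborFinset_eq_degree, Hst_neighborFinset]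
  simp [card_compl, mul_assoc]

lemma Hst_card_edgeFinset : (Hst s t).edgeFinset.card = 3 * s * (s - 1) * t ^ 2 := by
  have hsum := (Hst s t).sum_degrees_eq_twice_card_edges
  simp only [Hst_degree, sum_const, smul_eq_mul, card_univ, Fintype.card_prod,
    Fintype.card_fin] at hsum
  apply Nat.eq_of_mul_eq_mul_left two_pos
  rw [← hsum]
  ring

lemma Hst_inter_neighborSet (u v : Fin 3 × Fin s × Fin t) :
    (Hst s t).neighborSet u ∩ (Hst s t).neighborSet v
      = ↑(({u.1, v.1}ᶜ ×ˢ {u.2.1, v.2.1}ᶜ ×ˢ univ : Finset (Fin 3 × Fin s × Fin t))) := by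
  ext w
  simp only [Set.mem_inter_iff, mem_neighborSet, Hst_adj, coe_product, coe_compl, coe_insert,
    coe_singleton, coe_univ, Set.mem_prod, Set.mem_compl_iff, Set.mem_insert_iff,
    Set.mem_singleton_iff, Set.mem_univ, and_true]
  tauto

lemma Hst_ncard_inter_neighborSet {u v : Fin 3 × Fin s × Fin t} (h : (Hst s t).Adj u v) :
    ((Hst s t).neighborSet u ∩ (Hst s t).neighborSet v).ncard = (s - 2) * t := by
  rw [Hst_inter_neighborSet, Set.ncard_coe_finset, card_product, card_product, card_compl,
    card_compl, card_pair h.1, card_pair h.2]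
  simp

lemma Hst_bk : bk (Hst s t) = (s - 2) * t := by
  refine le_antisymm (bk_le_of_forall_adj fun u v h => (Hst_ncard_inter_neighborSet h).le) ?_
  -- The lower bound needs an edge; without one (`s < 2` or `t = 0`) the target is `0`.
  rcases Nat.lt_or_ge s 2 with hs | hs
  · simp [Nat.sub_eq_zero_of_le hs.le]
  rcases t.eq_zero_or_pos with rfl | ht
  · simp
  have hadj : (Hst s t).Adj (0, ⟨0, by omega⟩, ⟨0, ht⟩) (1, ⟨1, hs⟩, ⟨0, ht⟩) := by
    simp [Hst_adj, Fin.ext_iff]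
  exact (Hst_ncard_inter_neighborSet hadj).ge.trans (ncard_inter_neighborSet_le_bk hadj)

end Hst

theorem stmt9_general (s t n : ℕ) (hn : n = 3 * s * t) :
    (Hst s t).edgeFinset.card = 3 * s * (s - 1) * t ^ 2 ∧
    3 * s * (3 * s * (s - 1) * t ^ 2) = (s - 1) * n ^ 2 ∧
    bk (Hst s t) = (s - 2) * t ∧
    3 * s * ((s - 2) * t) = (s - 2) * n := by
  subst hn
  exact ⟨Hst_card_edgeFinset, by ring, Hst_bk, by ring⟩

theorem stmt9 (s t n : ℕ) (ht : 1 ≤ t) (hs : 3 < s) (hn : n = 3 * s * t) :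
    (Hst s t).edgeFinset.card = 3 * s * (s - 1) * t ^ 2 ∧
    3 * s * (3 * s * (s - 1) * t ^ 2) = (s - 1) * n ^ 2 ∧
    bk (Hst s t) = (s - 2) * t ∧
    3 * s * ((s - 2) * t) = (s - 2) * n :=
  stmt9_general s t n hn
end

section
/- Let t ≥ 1 and s > 8 be integers and n = 3st, and let m = (s−1)n²/(3s). Then every graph with n vertices and m edges has booksize at least (s−2)n/(3s), and there exists a graph with n vertices and m edges whose booksize equals (s−2)n/(3s); that is, β(n, m) = (s−2)n/(3s). -/
/-!
Write `b(u, v)` for the codegree and `d` for the degree. For every triangle `uvw`,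
inclusion-exclusion on the three neighbourhoods gives
`d(u) + d(v) + d(w) ≤ n + b(u, v) + b(u, w) + b(v, w)`; summed over ordered triangles this is
`3 ∑ b(u, v) d(u) ≤ 3 ∑ b(u, v)² + n ∑ b(u, v)`, the sums running over ordered edges.
Together with Cauchy-Schwarz `n ∑ d(u)² ≥ 4m²` it shows that for every `c ≥ 0` some edge has
`n (3 (d(u) + d(v)) (c - b) + 6 b² + 2 n b) ≥ 12 c m`. Taking `c = bk G` (or `c = 1` when `G` is
triangle-free) and using `d(u) + d(v) ≤ n + b`, this yields `6 m ≤ n² + 3 n bk G` whenever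
`n² < 4 m`, which for the given `m` is the lower bound `(s - 2) t`.

The bound is attained on `Fin 3 × Fin s × Fin t`, two vertices being adjacent when they differ
in both of the first two coordinates: this graph is `2 (s - 1) t`-regular and every edge lies in
exactly `(s - 2) t` triangles.
-/

open Finset
open scoped Classical

lemma Finset.card_add_card_add_card_le {α : Type*} [Fintype α] [DecidableEq α]
    (A B C : Finset α) :
    #A + #B + #C ≤ Fintype.card α + #(A ∩ B) + #(A ∩ C) + #(B ∩ C) := by
  have hAB := Finset.card_union_add_card_inter A B
  have hABC := Finset.card_union_add_card_inter (A ∪ B) C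
  rw [Finset.union_inter_distrib_right] at hABC
  have := Finset.card_union_le (A ∩ C) (B ∩ C)
  have := Finset.card_le_univ (A ∪ B ∪ C)
  omega

namespace SimpleGraph

section Booksize

variable {V W : Type*} {G : SimpleGraph V} {G' : SimpleGraph W}

lemma Iso.ncard_commonNeighbors (e : G ≃g G') (u v : V) :
    (G'.commonNeighbors (e u) (e v)).ncard = (G.commonNeighbors u v).ncard := by
  rw [← Set.ncard_image_of_injective _ e.injective]
  congr 1
  ext w
  obtain ⟨w, rfl⟩ := e.surjective w
  simp [mem_commonNeighbors, e.injective.eq_iff, Iso.map_adj_iff]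

variable [Fintype V] [Fintype W]

lemma le_bk {u v : V} (h : G.Adj u v) : (G.commonNeighbors u v).ncard ≤ bk G :=
  Finset.le_sup (f := fun p : V × V => (G.neighborSet p.1 ∩ G.neighborSet p.2).ncard)
    (Finset.mem_filter.2 ⟨Finset.mem_univ (u, v), h⟩)

lemma bk_le {k : ℕ} (h : ∀ u v, G.Adj u v → (G.commonNeighbors u v).ncard ≤ k) :
    bk G ≤ k :=
  Finset.sup_le fun p hp => h p.1 p.2 (Finset.mem_filter.1 hp).2

lemma Iso.bk_le (e : G ≃g G') : bk G ≤ bk G' :=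
  SimpleGraph.bk_le fun u v h => e.ncard_commonNeighbors u v ▸ le_bk (e.map_adj_iff.2 h)

lemma Iso.bk_eq (e : G ≃g G') : bk G = bk G' :=
  le_antisymm e.bk_le e.symm.bk_le

lemma bk_eq_of_forall_adj {k : ℕ} {u₀ v₀ : V} (h₀ : G.Adj u₀ v₀)
    (h : ∀ u v, G.Adj u v → (G.commonNeighbors u v).ncard = k) : bk G = k :=
  le_antisymm (bk_le fun u v huv => (h u v huv).le) (h u₀ v₀ h₀ ▸ le_bk h₀)

end Booksize

section Codegree

variable {V : Type*} [Fintype V] (G : SimpleGraph V) [DecidableRel G.Adj]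

lemma sum_sum_neighborFinset_comm {M : Type*} [AddCommMonoid M] (f : V → V → M) :
    ∑ u, ∑ v ∈ G.neighborFinset u, f u v = ∑ u, ∑ v ∈ G.neighborFinset u, f v u :=
  Finset.sum_comm' fun u v => by simp [G.adj_comm]

lemma sum_sum_neighborFinset_degree :
    ∑ u, ∑ _ ∈ G.neighborFinset u, G.degree u = ∑ u, G.degree u ^ 2 := by
  simp [sq]

lemma sq_two_mul_card_edgeFinset_le :
    (2 * #G.edgeFinset) ^ 2 ≤ Fintype.card V * ∑ u, G.degree u ^ 2 := by
  rw [← sum_degrees_eq_twice_card_edges]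
  exact sq_sum_le_card_mul_sum_sq

variable [DecidableEq V]

def codegree (u v : V) : ℕ := #(G.neighborFinset u ∩ G.neighborFinset v)

lemma ncard_commonNeighbors (u v : V) : (G.commonNeighbors u v).ncard = G.codegree u v := by
  rw [codegree, ← Set.ncard_coe_finset]
  congr 1
  ext w
  simp [mem_commonNeighbors]

lemma codegree_comm (u v : V) : G.codegree u v = G.codegree v u := by
  rw [codegree, codegree, Finset.inter_comm]

lemma degree_add_degree_le (u v : V) :
    G.degree u + G.degree v ≤ Fintype.card V + G.codegree u v := by
  rw [← card_neighborFinset_eq_degree, ← card_neighborFinset_eq_degree, codegree,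
    ← Finset.card_union_add_card_inter]
  exact Nat.add_le_add_right (Finset.card_le_univ _) _

lemma degree_add_degree_add_degree_le (u v w : V) :
    G.degree u + G.degree v + G.degree w ≤
      Fintype.card V + G.codegree u v + G.codegree u w + G.codegree v w :=
  Finset.card_add_card_add_card_le _ _ _

lemma sum_sum_codegree_mul_degree_comm :
    ∑ u, ∑ v ∈ G.neighborFinset u, G.codegree u v * G.degree v =
      ∑ u, ∑ v ∈ G.neighborFinset u, G.codegree u v * G.degree u := by
  rw [sum_sum_neighborFinset_comm]
  simp_rw [G.codegree_comm]

section OrderedTriangles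

variable {M : Type*} [AddCommMonoid M]

def sumOrderedTriangles (f : V → V → V → M) : M :=
  ∑ u, ∑ v ∈ G.neighborFinset u, ∑ w ∈ G.neighborFinset u ∩ G.neighborFinset v, f u v w

lemma sumOrderedTriangles_add (f g : V → V → V → M) :
    G.sumOrderedTriangles (fun u v w => f u v w + g u v w) =
      G.sumOrderedTriangles f + G.sumOrderedTriangles g := by
  simp only [sumOrderedTriangles, Finset.sum_add_distrib]

lemma sumOrderedTriangles_swap_left (f : V → V → V → M) :
    G.sumOrderedTriangles (fun u v w => f v u w) = G.sumOrderedTriangles f := by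
  rw [sumOrderedTriangles, sum_sum_neighborFinset_comm]
  simp_rw [Finset.inter_comm]
  rfl

lemma sumOrderedTriangles_swap_right (f : V → V → V → M) :
    G.sumOrderedTriangles (fun u v w => f u w v) = G.sumOrderedTriangles f :=
  Finset.sum_congr rfl fun _ _ => Finset.sum_comm' fun v w => by simp [G.adj_comm]; tauto

lemma sumOrderedTriangles_eq_sum_nsmul (f : V → V → M) :
    G.sumOrderedTriangles (fun u v _ => f u v) =
      ∑ u, ∑ v ∈ G.neighborFinset u, G.codegree u v • f u v := by
  simp [sumOrderedTriangles, codegree]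

end OrderedTriangles

theorem three_mul_sum_codegree_mul_degree_le :
    3 * ∑ u, ∑ v ∈ G.neighborFinset u, G.codegree u v * G.degree u ≤
      3 * ∑ u, ∑ v ∈ G.neighborFinset u, G.codegree u v ^ 2 +
        Fintype.card V * ∑ u, ∑ v ∈ G.neighborFinset u, G.codegree u v := by
  have key : G.sumOrderedTriangles (fun u v w => G.degree u + G.degree v + G.degree w) ≤
      G.sumOrderedTriangles (fun u v w => Fintype.card V + G.codegree u v + G.codegree u w +
        G.codegree v w) :=
    Finset.sum_le_sum fun u _ => Finset.sum_le_sum fun v _ => Finset.sum_le_sum fun w _ =>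
      G.degree_add_degree_add_degree_le u v w
  simp only [sumOrderedTriangles_add] at key
  rw [G.sumOrderedTriangles_swap_right fun _ v _ => G.degree v,
    G.sumOrderedTriangles_swap_left fun u _ _ => G.degree u,
    G.sumOrderedTriangles_swap_left fun u _ w => G.codegree u w,
    G.sumOrderedTriangles_swap_right fun u v _ => G.codegree u v] at key
  simp only [sumOrderedTriangles_eq_sum_nsmul, smul_eq_mul] at key
  simp only [sq, mul_comm _ (Fintype.card V), ← Finset.mul_sum] at key ⊢
  omega

theorem mul_sq_card_edgeFinset_le (c : ℤ) (hc : 0 ≤ c) :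
    24 * c * #G.edgeFinset ^ 2 ≤ Fintype.card V * ∑ u, ∑ v ∈ G.neighborFinset u,
      (3 * ((G.degree u + G.degree v : ℕ) : ℤ) * (c - G.codegree u v) +
        6 * (G.codegree u v : ℤ) ^ 2 + 2 * Fintype.card V * G.codegree u v) := by
  have hdv := G.sum_sum_neighborFinset_comm fun u _ => G.degree u
  rw [sum_sum_neighborFinset_degree] at hdv
  have hdu := G.sum_sum_neighborFinset_degree
  have hbd := G.sum_sum_codegree_mul_degree_comm
  have htri := G.three_mul_sum_codegree_mul_degree_le
  have hCS := G.sq_two_mul_card_edgeFinset_le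
  have expand : ∑ u, ∑ v ∈ G.neighborFinset u,
      (3 * ((G.degree u + G.degree v : ℕ) : ℤ) * (c - G.codegree u v) +
        6 * (G.codegree u v : ℤ) ^ 2 + 2 * Fintype.card V * G.codegree u v) =
      3 * c * ((∑ u, ∑ v ∈ G.neighborFinset u, G.degree u : ℕ) +
        (∑ u, ∑ v ∈ G.neighborFinset u, G.degree v : ℕ)) -
      3 * ((∑ u, ∑ v ∈ G.neighborFinset u, G.codegree u v * G.degree u : ℕ) +
        (∑ u, ∑ v ∈ G.neighborFinset u, G.codegree u v * G.degree v : ℕ)) +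
      6 * (∑ u, ∑ v ∈ G.neighborFinset u, G.codegree u v ^ 2 : ℕ) +
      2 * Fintype.card V * (∑ u, ∑ v ∈ G.neighborFinset u, G.codegree u v : ℕ) := by
    push_cast
    simp only [Finset.mul_sum, ← Finset.sum_add_distrib, ← Finset.sum_sub_distrib]
    exact Finset.sum_congr rfl fun u _ => Finset.sum_congr rfl fun v _ => by ring
  rw [expand, hdu, ← hdv, hbd]
  generalize ∑ u, ∑ v ∈ G.neighborFinset u, G.codegree u v * G.degree u = B at htri ⊢
  generalize ∑ u, ∑ v ∈ G.neighborFinset u, G.codegree u v ^ 2 = B₂ at htri ⊢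
  generalize ∑ u, ∑ v ∈ G.neighborFinset u, G.codegree u v = B₁ at htri ⊢
  generalize ∑ u, G.degree u ^ 2 = D₂ at hCS ⊢
  zify at htri hCS
  nlinarith [mul_le_mul_of_nonneg_left hCS hc,
    mul_nonneg (Int.natCast_nonneg (Fintype.card V)) (sub_nonneg.2 htri)]

theorem exists_adj_mul_card_edgeFinset_le (c : ℤ) (hc : 0 ≤ c) (hE : G.edgeFinset.Nonempty) :
    ∃ u v, G.Adj u v ∧ 12 * c * #G.edgeFinset ≤ Fintype.card V *
      (3 * ((G.degree u + G.degree v : ℕ) : ℤ) * (c - G.codegree u v) +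
        6 * (G.codegree u v : ℤ) ^ 2 + 2 * Fintype.card V * G.codegree u v) := by
  have hne : (univ.sigma fun u => G.neighborFinset u).Nonempty := by
    obtain ⟨e, he⟩ := hE
    induction e using Sym2.ind with | h u v => exact ⟨⟨u, v⟩, by simpa using he⟩
  have hcard : (#(univ.sigma fun u => G.neighborFinset u) : ℤ) = 2 * #G.edgeFinset := by
    rw [Finset.card_sigma]
    exact_mod_cast G.sum_degrees_eq_twice_card_edges
  obtain ⟨⟨u, v⟩, huv, hle⟩ := Finset.exists_le_of_sum_le hne
    (f := fun _ => 12 * c * #G.edgeFinset)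
    (g := fun x => (Fintype.card V : ℤ) *
      (3 * ((G.degree x.1 + G.degree x.2 : ℕ) : ℤ) * (c - G.codegree x.1 x.2) +
        6 * (G.codegree x.1 x.2 : ℤ) ^ 2 + 2 * Fintype.card V * G.codegree x.1 x.2)) (by
    rw [Finset.sum_const, nsmul_eq_mul, hcard, ← Finset.mul_sum, Finset.sum_sigma]
    nlinarith [G.mul_sq_card_edgeFinset_le c hc])
  exact ⟨u, v, by simpa using huv, hle⟩

end Codegree

lemma three_mul_mul_sub_add_le {n b c y : ℤ} (hb : 0 ≤ b) (hbc : b ≤ c) (hy : y ≤ n + b) :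
    3 * y * (c - b) + 6 * b ^ 2 + 2 * n * b ≤ 3 * n * c + b * (6 * c - n) := by
  nlinarith [mul_le_mul_of_nonneg_right hy (sub_nonneg.2 hbc), mul_le_mul_of_nonneg_left hbc hb]

theorem six_mul_card_edgeFinset_le {V : Type*} [Fintype V] [DecidableEq V] (G : SimpleGraph V)
    [DecidableRel G.Adj] (h : Fintype.card V ^ 2 < 4 * #G.edgeFinset) :
    6 * #G.edgeFinset ≤ Fintype.card V ^ 2 + 3 * Fintype.card V * bk G := by
  have hE : G.edgeFinset.Nonempty := Finset.card_pos.1 (by omega)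
  have hb {u v : V} (huv : G.Adj u v) : G.codegree u v ≤ bk G :=
    G.ncard_commonNeighbors u v ▸ le_bk huv
  zify at h ⊢
  rcases (bk G).eq_zero_or_pos with hβ | hβ
  · obtain ⟨u, v, huv, hle⟩ := G.exists_adj_mul_card_edgeFinset_le 1 zero_le_one hE
    have hb0 : G.codegree u v = 0 := by have := hb huv; omega
    have hy := G.degree_add_degree_le u v
    rw [hb0] at hle hy
    push_cast at hle
    nlinarith
  · obtain ⟨u, v, huv, hle⟩ := G.exists_adj_mul_card_edgeFinset_le (bk G) (by positivity) hE
    have hw := three_mul_mul_sub_add_le (n := Fintype.card V)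
      (y := ((G.degree u + G.degree v : ℕ) : ℤ)) (Int.natCast_nonneg (G.codegree u v))
      (Int.ofNat_le.2 (hb huv)) (by exact_mod_cast G.degree_add_degree_le u v)
    have hX := hle.trans (mul_le_mul_of_nonneg_left hw (Int.natCast_nonneg _))
    have hbβ : (G.codegree u v : ℤ) ≤ bk G := Int.ofNat_le.2 (hb huv)
    have hb0 : 0 ≤ (G.codegree u v : ℤ) := Int.natCast_nonneg _
    have hn0 : 0 ≤ (Fintype.card V : ℤ) := Int.natCast_nonneg _
    have hβ0 : 0 < (bk G : ℤ) := Int.natCast_pos.2 hβ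
    generalize (G.codegree u v : ℤ) = b at hX hbβ hb0
    generalize (bk G : ℤ) = β at hX hbβ hβ0 ⊢
    generalize (Fintype.card V : ℤ) = n at hX h hn0 ⊢
    generalize (#G.edgeFinset : ℤ) = m at hX h ⊢
    rcases le_or_gt (6 * β) n with hn | hn
    · nlinarith [mul_nonneg (mul_nonneg hn0 hb0) (sub_nonneg.2 hn), mul_lt_mul_of_pos_left h hβ0]
    · have : β * (6 * m) ≤ β * (n ^ 2 + 3 * n * β) := by
        nlinarith [mul_nonneg (mul_nonneg hn0 (sub_nonneg.2 hbβ)) (sub_nonneg.2 hn.le)]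
      exact le_of_mul_le_mul_left this hβ0

section Blowup

variable {α β γ : Type*}

variable (α β γ) in
/-- The tensor product `K_α × K_β` with every vertex blown up to an independent set indexed
by `γ`. -/
def completeTensorBlowup : SimpleGraph (α × β × γ) where
  Adj x y := x.1 ≠ y.1 ∧ x.2.1 ≠ y.2.1
  symm := ⟨fun _ _ h => ⟨h.1.symm, h.2.symm⟩⟩
  loopless := ⟨fun _ h => h.1 rfl⟩

@[simp]
lemma completeTensorBlowup_adj {x y : α × β × γ} :
    (completeTensorBlowup α β γ).Adj x y ↔ x.1 ≠ y.1 ∧ x.2.1 ≠ y.2.1 :=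
  Iff.rfl

variable [Fintype α] [Fintype β] [Fintype γ] [DecidableEq α] [DecidableEq β]

lemma neighborFinset_completeTensorBlowup (x : α × β × γ) :
    (completeTensorBlowup α β γ).neighborFinset x = {x.1}ᶜ ×ˢ {x.2.1}ᶜ ×ˢ univ := by
  ext y
  simp [eq_comm]

lemma two_mul_card_edgeFinset_completeTensorBlowup :
    2 * #(completeTensorBlowup α β γ).edgeFinset = Fintype.card (α × β × γ) *
      ((Fintype.card α - 1) * ((Fintype.card β - 1) * Fintype.card γ)) := by
  rw [← sum_degrees_eq_twice_card_edges]
  simp [← card_neighborFinset_eq_degree, neighborFinset_completeTensorBlowup, Finset.card_compl]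

lemma codegree_completeTensorBlowup [DecidableEq γ] {x y : α × β × γ}
    (h : (completeTensorBlowup α β γ).Adj x y) :
    (completeTensorBlowup α β γ).codegree x y =
      (Fintype.card α - 2) * ((Fintype.card β - 2) * Fintype.card γ) := by
  rw [completeTensorBlowup_adj] at h
  rw [codegree, neighborFinset_completeTensorBlowup, neighborFinset_completeTensorBlowup,
    Finset.product_inter_product, Finset.product_inter_product, ← Finset.compl_union,
    ← Finset.compl_union, Finset.inter_self, ← Finset.insert_eq, ← Finset.insert_eq,
    Finset.card_product, Finset.card_product,
    Finset.card_compl, Finset.card_compl, Finset.card_pair h.1, Finset.card_pair h.2,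
    Finset.card_univ]

lemma bk_completeTensorBlowup [DecidableEq γ] [Nonempty γ] (hα : 2 ≤ Fintype.card α)
    (hβ : 2 ≤ Fintype.card β) :
    bk (completeTensorBlowup α β γ) =
      (Fintype.card α - 2) * ((Fintype.card β - 2) * Fintype.card γ) := by
  obtain ⟨a, a', ha⟩ := Fintype.one_lt_card_iff.1 hα
  obtain ⟨b, b', hb⟩ := Fintype.one_lt_card_iff.1 hβ
  obtain ⟨c⟩ := ‹Nonempty γ›
  refine bk_eq_of_forall_adj (u₀ := (a, b, c)) (v₀ := (a', b', c)) ⟨ha, hb⟩ fun u v h => ?_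
  rw [ncard_commonNeighbors, codegree_completeTensorBlowup h]

end Blowup

end SimpleGraph

theorem stmt10 (s t n m : ℕ) (ht : 1 ≤ t) (hs : 8 < s) (hn : n = 3 * s * t)
    (hm : m * (3 * s) = (s - 1) * n ^ 2) :
    (∀ G : SimpleGraph (Fin n), G.edgeFinset.card = m → (s - 2) * t ≤ bk G) ∧
    (∃ G : SimpleGraph (Fin n), G.edgeFinset.card = m ∧ bk G = (s - 2) * t) ∧
    3 * s * ((s - 2) * t) = (s - 2) * n := by
  subst hn
  obtain ⟨k, rfl⟩ : ∃ k, s = k + 2 := ⟨s - 2, by omega⟩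
  have hm' : m = 3 * (k + 2) * ((k + 1) * t ^ 2) :=
    Nat.eq_of_mul_eq_mul_right (by omega : 0 < 3 * (k + 2))
      (by rw [hm, show k + 2 - 1 = k + 1 by omega]; ring)
  simp only [Nat.add_sub_cancel]
  refine ⟨fun G hG => ?_, ?_, by ring⟩
  · have key := G.six_mul_card_edgeFinset_le (by rw [Fintype.card_fin, hG, hm']; nlinarith)
    rw [Fintype.card_fin, hG, hm'] at key
    refine Nat.le_of_mul_le_mul_left ?_ (by positivity : 0 < 9 * (k + 2) * t)
    nlinarith
  · let H := SimpleGraph.completeTensorBlowup (Fin 3) (Fin (k + 2)) (Fin t)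
    let e : Fin 3 × Fin (k + 2) × Fin t ≃ Fin (3 * (k + 2) * t) :=
      Fintype.equivFinOfCardEq (by simp [mul_assoc])
    have : Nonempty (Fin t) := ⟨⟨0, ht⟩⟩
    refine ⟨H.map e, ?_, ?_⟩
    · have hH := SimpleGraph.two_mul_card_edgeFinset_completeTensorBlowup
        (α := Fin 3) (β := Fin (k + 2)) (γ := Fin t)
      simp only [Fintype.card_prod, Fintype.card_fin] at hH
      convert (SimpleGraph.Iso.map e H).card_edgeFinset_eq.symm
      nlinarith
    · rw [← (SimpleGraph.Iso.map e H).bk_eq, SimpleGraph.bk_completeTensorBlowup] <;> simp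
end

section
/- For every positive integer k there exists a graph G with n = 6k vertices and 9k² + 3 edges (so that e(G) > n²/4) whose booksize is exactly k + 1 = n/6 + 1. Such a graph is obtained from six disjoint sets A₁₁, A₁₂, A₁₃, A₂₁, A₂₂, A₂₃ with |A₁₁| = |A₁₂| = |A₁₃| = k−1 and |A₂₁| = |A₂₂| = |A₂₃| = k+1, joining every vertex of A_{ij} to every vertex of A_{ik} for 1 ≤ j < k ≤ 3 and i = 1, 2, and joining every vertex of A_{1j} to every vertex of A_{2j} for j = 1, 2, 3. -/
/-!
With `|A₁j| = a` and `|A₂j| = b`, a vertex of `A₁j` has degree `2a + b` and one of `A₂j` degree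
`a + 2b`, so by handshaking there are `3(a² + ab + b²)` edges, which is `9k² + 3` for
`a = k - 1`, `b = k + 1`. Two adjacent vertices either lie in `A_ij` and `A_il` with `j ≠ l`,
and then their common neighbourhood is exactly the third class `A_im`, or in `A₁j` and `A₂j`,
which have no common neighbour. Hence the booksize is `max a b = k + 1`.
-/

open Finset
open scoped Classical

/-- The Edwards / Khadžiivanov–Nikiforov graph: the class `A_{1j}` is
`{j} × (Fin (k-1)).inl` and `A_{2j}` is `{j} × (Fin (k+1)).inr`; vertices of `A_{ij}` and
`A_{ik}` are joined for `j ≠ k`, and vertices of `A_{1j}` and `A_{2j}` are joined. -/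
def EFG (k : ℕ) : SimpleGraph (Fin 3 × (Fin (k - 1) ⊕ Fin (k + 1))) where
  Adj u v := (u.1 ≠ v.1 ∧ u.2.isLeft = v.2.isLeft) ∨ (u.1 = v.1 ∧ u.2.isLeft ≠ v.2.isLeft)
  symm := by
    constructor
    intro u v h
    rcases h with ⟨h1, h2⟩ | ⟨h1, h2⟩
    · exact Or.inl ⟨h1.symm, h2.symm⟩
    · exact Or.inr ⟨h1.symm, h2.symm⟩
  loopless := by
    constructor
    intro u h
    rcases h with ⟨h1, _⟩ | ⟨_, h2⟩
    · exact h1 rfl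
    · exact h2 rfl


theorem bk_le_iff {V : Type*} [Fintype V] {G : SimpleGraph V} {m : ℕ} :
    bk G ≤ m ↔ ∀ u v, G.Adj u v → (G.neighborSet u ∩ G.neighborSet v).ncard ≤ m := by
  simp [bk, Finset.sup_le_iff]

theorem ncard_neighborSet_inter_le_bk {V : Type*} [Fintype V] {G : SimpleGraph V} {u v : V}
    (h : G.Adj u v) : (G.neighborSet u ∩ G.neighborSet v).ncard ≤ bk G :=
  bk_le_iff.1 le_rfl u v h

theorem Fin.ne_and_ne_iff_eq_neg_add {i j c : Fin 3} (h : i ≠ j) :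
    c ≠ i ∧ c ≠ j ↔ c = -(i + j) := by
  revert i j c; decide

def edwardsGraph (α β : Type*) : SimpleGraph (Fin 3 × (α ⊕ β)) where
  Adj u v := (u.1 ≠ v.1 ∧ u.2.isLeft = v.2.isLeft) ∨ (u.1 = v.1 ∧ u.2.isLeft ≠ v.2.isLeft)
  symm := ⟨fun _ _ => Or.imp (And.imp Ne.symm Eq.symm) (And.imp Eq.symm Ne.symm)⟩
  loopless := ⟨fun _ h => h.elim (fun h => h.1 rfl) (fun h => h.2 rfl)⟩

theorem EFG_eq_edwardsGraph (k : ℕ) : EFG k = edwardsGraph (Fin (k - 1)) (Fin (k + 1)) := rfl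

namespace edwardsGraph

variable {α β : Type*}

/-- `part c true` and `part c false` are the classes `A₁c` and `A₂c`. -/
def part (c : Fin 3) (left : Bool) : Set (Fin 3 × (α ⊕ β)) :=
  {w | w.1 = c ∧ w.2.isLeft = left}

theorem ncard_part_true (c : Fin 3) :
    (part c true : Set (Fin 3 × (α ⊕ β))).ncard = Nat.card α := by
  have : (part c true : Set (Fin 3 × (α ⊕ β))) = Set.range fun x => (c, .inl x) := by
    ext ⟨i, _ | _⟩ <;> simp [part, eq_comm (a := i)]
  rw [this, Set.ncard_range_of_injective (fun x y h => by simpa using h)]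

theorem ncard_part_false (c : Fin 3) :
    (part c false : Set (Fin 3 × (α ⊕ β))).ncard = Nat.card β := by
  have : (part c false : Set (Fin 3 × (α ⊕ β))) = Set.range fun y => (c, .inr y) := by
    ext ⟨i, _ | _⟩ <;> simp [part, eq_comm (a := i)]
  rw [this, Set.ncard_range_of_injective (fun x y h => by simpa using h)]

theorem neighborSet_inter_of_fst_ne {u v : Fin 3 × (α ⊕ β)} (h₁ : u.1 ≠ v.1)
    (h₂ : u.2.isLeft = v.2.isLeft) :
    (edwardsGraph α β).neighborSet u ∩ (edwardsGraph α β).neighborSet v =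
      part (-(u.1 + v.1)) u.2.isLeft := by
  ext w
  simp only [Set.mem_inter_iff, SimpleGraph.mem_neighborSet, edwardsGraph, part,
    Set.mem_ofPred_eq, ← Fin.ne_and_ne_iff_eq_neg_add h₁]
  grind

theorem neighborSet_inter_of_fst_eq {u v : Fin 3 × (α ⊕ β)} (h₁ : u.1 = v.1)
    (h₂ : u.2.isLeft ≠ v.2.isLeft) :
    (edwardsGraph α β).neighborSet u ∩ (edwardsGraph α β).neighborSet v = ∅ := by
  ext w
  simp only [Set.mem_inter_iff, SimpleGraph.mem_neighborSet, edwardsGraph,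
    Set.mem_empty_iff_false, iff_false]
  grind

variable [Fintype α] [Fintype β]

theorem degree_inl (i : Fin 3) (x : α) :
    (edwardsGraph α β).degree (i, .inl x) = 2 * Fintype.card α + Fintype.card β := by
  rw [← SimpleGraph.card_neighborFinset_eq_degree, SimpleGraph.neighborFinset_eq_filter,
    Finset.card_filter, Fintype.sum_prod_type]
  simp only [Fintype.sum_sum_type]
  fin_cases i <;> simp [edwardsGraph, Fin.sum_univ_three] <;> ring

theorem degree_inr (i : Fin 3) (y : β) :
    (edwardsGraph α β).degree (i, .inr y) = Fintype.card α + 2 * Fintype.card β := by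
  rw [← SimpleGraph.card_neighborFinset_eq_degree, SimpleGraph.neighborFinset_eq_filter,
    Finset.card_filter, Fintype.sum_prod_type]
  simp only [Fintype.sum_sum_type]
  fin_cases i <;> simp [edwardsGraph, Fin.sum_univ_three] <;> ring

theorem card_edgeFinset :
    (edwardsGraph α β).edgeFinset.card =
      3 * (Fintype.card α ^ 2 + Fintype.card α * Fintype.card β + Fintype.card β ^ 2) := by
  have h := (edwardsGraph α β).sum_degrees_eq_twice_card_edges
  simp only [Fintype.sum_prod_type, Fintype.sum_sum_type, degree_inl, degree_inr,
    Finset.sum_const, Finset.card_univ, Fintype.card_fin, smul_eq_mul] at h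
  linarith

theorem ncard_part_le_bk (s : α ⊕ β) :
    (part (α := α) (β := β) 2 s.isLeft).ncard ≤ bk (edwardsGraph α β) := by
  have h01 : (0 : Fin 3) ≠ 1 := by decide
  have hadj : (edwardsGraph α β).Adj (0, s) (1, s) := Or.inl ⟨h01, rfl⟩
  have h := ncard_neighborSet_inter_le_bk hadj
  rwa [neighborSet_inter_of_fst_ne (u := (0, s)) (v := (1, s)) h01 rfl] at h

theorem bk_eq : bk (edwardsGraph α β) = max (Nat.card α) (Nat.card β) := by
  refine le_antisymm (bk_le_iff.2 fun u v huv => ?_) (max_le ?_ ?_)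
  · rcases huv with ⟨h₁, h₂⟩ | ⟨h₁, h₂⟩
    · rw [neighborSet_inter_of_fst_ne h₁ h₂]
      cases u.2.isLeft
      · simp [ncard_part_false]
      · simp [ncard_part_true]
    · simp [neighborSet_inter_of_fst_eq h₁ h₂]
  · rcases isEmpty_or_nonempty α with _ | ⟨⟨x⟩⟩
    · simp
    · simpa [ncard_part_true] using ncard_part_le_bk (β := β) (.inl x)
  · rcases isEmpty_or_nonempty β with _ | ⟨⟨y⟩⟩
    · simp
    · simpa [ncard_part_false] using ncard_part_le_bk (α := α) (.inr y)

end edwardsGraph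

theorem stmt11 (k : ℕ) (hk : 1 ≤ k) :
    Fintype.card (Fin 3 × (Fin (k - 1) ⊕ Fin (k + 1))) = 6 * k ∧
    (EFG k).edgeFinset.card = 9 * k ^ 2 + 3 ∧
    (9 * k ^ 2 + 3 : ℝ) > (6 * k : ℝ) ^ 2 / 4 ∧
    bk (EFG k) = k + 1 := by
  obtain ⟨m, rfl⟩ : ∃ m, k = m + 1 := ⟨k - 1, by omega⟩
  refine ⟨?_, ?_, by linarith, ?_⟩
  · simp only [Fintype.card_prod, Fintype.card_sum, Fintype.card_fin]
    omega
  · rw [EFG_eq_edwardsGraph, edwardsGraph.card_edgeFinset]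
    simp only [Fintype.card_fin, Nat.add_sub_cancel]
    ring
  · rw [EFG_eq_edwardsGraph, edwardsGraph.bk_eq, Nat.card_fin, Nat.card_fin, Nat.add_sub_cancel]
    omega
end

section
/- Let G be a graph with n vertices, m edges, and degree sequence d(1), ..., d(n). If Σ_{i=1}^{n} d(i)² > n·m, then bk(G) > n/6. -/
open Finset
open scoped Classical

set_option linter.unusedSectionVars false

namespace KNaux
variable {V : Type*} [Fintype V]

noncomputable def AA (G : SimpleGraph V) (u v : V) : ℕ := if G.Adj u v then 1 else 0

noncomputable def cN (G : SimpleGraph V) (u v : V) : ℕ :=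
  (G.neighborFinset u ∩ G.neighborFinset v).card

noncomputable def aN (G : SimpleGraph V) (u v : V) : ℕ :=
  ((G.neighborFinset u)ᶜ ∩ (G.neighborFinset v)ᶜ).card

lemma AA_symm (G : SimpleGraph V) (u v : V) : AA G u v = AA G v u := by
  simp only [AA, SimpleGraph.adj_comm]

lemma sum_AA (G : SimpleGraph V) (u : V) : ∑ v, AA G u v = G.degree u := by
  rw [← SimpleGraph.card_neighborFinset_eq_degree, SimpleGraph.neighborFinset_eq_filter,
    Finset.card_filter]
  rfl

lemma cN_eq_sum (G : SimpleGraph V) (u v : V) :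
    cN G u v = ∑ w, AA G u w * AA G v w := by
  have h : G.neighborFinset u ∩ G.neighborFinset v
      = Finset.univ.filter (fun w => G.Adj u w ∧ G.Adj v w) := by
    ext w; simp [SimpleGraph.mem_neighborFinset]
  rw [cN, h, Finset.card_filter]
  refine Finset.sum_congr rfl fun w _ => ?_
  by_cases h1 : G.Adj u w <;> by_cases h2 : G.Adj v w <;> simp [AA, h1, h2]

lemma key_pair (G : SimpleGraph V) (u v : V) :
    G.degree u + G.degree v + aN G u v = Fintype.card V + cN G u v := by
  have h1 : (G.neighborFinset u ∪ G.neighborFinset v).card + cN G u v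
      = G.degree u + G.degree v := by
    rw [cN, ← SimpleGraph.card_neighborFinset_eq_degree,
      ← SimpleGraph.card_neighborFinset_eq_degree]
    exact Finset.card_union_add_card_inter _ _
  have h2 : (G.neighborFinset u ∪ G.neighborFinset v).card + aN G u v = Fintype.card V := by
    rw [aN, ← Finset.compl_union]
    exact Finset.card_add_card_compl _
  omega

lemma key_triple (G : SimpleGraph V) (u v w : V) :
    Fintype.card V ≤ (cN G u v + aN G u v) + (cN G u w + aN G u w) + (cN G v w + aN G v w) := by
  simp only [cN, aN]
  set s1 := G.neighborFinset u
  set s2 := G.neighborFinset v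
  set s3 := G.neighborFinset w
  have hsub : (Finset.univ : Finset V) ⊆
      (s1 ∩ s2) ∪ (s1ᶜ ∩ s2ᶜ) ∪ (s1 ∩ s3) ∪ (s1ᶜ ∩ s3ᶜ) ∪ (s2 ∩ s3) ∪ (s2ᶜ ∩ s3ᶜ) := by
    intro x _
    by_cases h1 : x ∈ s1 <;> by_cases h2 : x ∈ s2 <;> by_cases h3 : x ∈ s3 <;>
      simp [Finset.mem_union, Finset.mem_inter, Finset.mem_compl, h1, h2, h3]
  have hcard := Finset.card_le_card hsub
  rw [Finset.card_univ] at hcard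
  have hu1 := Finset.card_union_le ((s1 ∩ s2) ∪ (s1ᶜ ∩ s2ᶜ) ∪ (s1 ∩ s3) ∪ (s1ᶜ ∩ s3ᶜ) ∪ (s2 ∩ s3)) (s2ᶜ ∩ s3ᶜ)
  have hu2 := Finset.card_union_le ((s1 ∩ s2) ∪ (s1ᶜ ∩ s2ᶜ) ∪ (s1 ∩ s3) ∪ (s1ᶜ ∩ s3ᶜ)) (s2 ∩ s3)
  have hu3 := Finset.card_union_le ((s1 ∩ s2) ∪ (s1ᶜ ∩ s2ᶜ) ∪ (s1 ∩ s3)) (s1ᶜ ∩ s3ᶜ)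
  have hu4 := Finset.card_union_le ((s1 ∩ s2) ∪ (s1ᶜ ∩ s2ᶜ)) (s1 ∩ s3)
  have hu5 := Finset.card_union_le (s1 ∩ s2) (s1ᶜ ∩ s2ᶜ)
  omega

lemma cN_le_bk (G : SimpleGraph V) {u v : V} (h : G.Adj u v) : cN G u v ≤ bk G := by
  have hmem : (u, v) ∈ Finset.univ.filter (fun p : V × V => G.Adj p.1 p.2) := by
    simp [h]
  have hle := Finset.le_sup
    (f := fun p : V × V => (G.neighborSet p.1 ∩ G.neighborSet p.2).ncard) hmem
  have heq : cN G u v = (G.neighborSet u ∩ G.neighborSet v).ncard := by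
    rw [cN, ← Set.ncard_coe_finset]
    congr 1
    simp [Finset.coe_inter, SimpleGraph.neighborFinset_def, Set.coe_toFinset]
  rw [bk]
  rw [heq]
  exact hle

-- triple sum computations
lemma T3_eq (G : SimpleGraph V) (F : V → V → ℕ) :
    ∑ u : V, ∑ v : V, ∑ w : V, AA G u v * AA G u w * AA G v w * F u v
      = ∑ u : V, ∑ v : V, AA G u v * (cN G u v * F u v) := by
  refine Finset.sum_congr rfl fun u _ => Finset.sum_congr rfl fun v _ => ?_
  rw [cN_eq_sum, Finset.sum_mul, Finset.mul_sum]
  exact Finset.sum_congr rfl fun w _ => by ring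

lemma T3_13 (G : SimpleGraph V) (F : V → V → ℕ) :
    ∑ u : V, ∑ v : V, ∑ w : V, AA G u v * AA G u w * AA G v w * F u w
      = ∑ u : V, ∑ v : V, ∑ w : V, AA G u v * AA G u w * AA G v w * F u v := by
  refine Finset.sum_congr rfl fun u _ => ?_
  rw [Finset.sum_comm]
  refine Finset.sum_congr rfl fun v _ => Finset.sum_congr rfl fun w _ => ?_
  rw [AA_symm G w v]; ring

lemma T3_23 (G : SimpleGraph V) (F : V → V → ℕ) :
    ∑ u : V, ∑ v : V, ∑ w : V, AA G u v * AA G u w * AA G v w * F v w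
      = ∑ u : V, ∑ v : V, ∑ w : V, AA G u v * AA G u w * AA G v w * F u w := by
  rw [Finset.sum_comm]
  refine Finset.sum_congr rfl fun u _ => Finset.sum_congr rfl fun v _ =>
    Finset.sum_congr rfl fun w _ => ?_
  rw [AA_symm G v u]; ring

end KNaux


open KNaux

theorem stmt12 {V : Type*} [Fintype V] (G : SimpleGraph V) (n m : ℕ)
    (hn : n = Fintype.card V) (hm : m = G.edgeFinset.card)
    (h : ∑ i : V, (G.degree i) ^ 2 > n * m) :
    (bk G : ℝ) > n / 6 := by
  classical
  -- Step 1: the pair identity summed over adjacent pairs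
  have hEq1 : ∑ u : V, ∑ v : V, AA G u v * (G.degree u + G.degree v + aN G u v)
      = ∑ u : V, ∑ v : V, AA G u v * (n + cN G u v) :=
    Finset.sum_congr rfl fun u _ => Finset.sum_congr rfl fun v _ => by
      rw [key_pair, hn]
  have h1 : ∑ u : V, ∑ v : V, AA G u v * G.degree u = ∑ i : V, G.degree i ^ 2 :=
    Finset.sum_congr rfl fun u _ => by
      rw [← Finset.sum_mul, sum_AA, sq]
  have h2 : ∑ u : V, ∑ v : V, AA G u v * G.degree v = ∑ i : V, G.degree i ^ 2 := by
    rw [Finset.sum_comm]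
    refine Finset.sum_congr rfl fun v _ => ?_
    rw [← Finset.sum_mul, sq]
    congr 1
    rw [← sum_AA G v]
    exact Finset.sum_congr rfl fun u _ => AA_symm G u v
  have h3 : ∑ u : V, ∑ v : V, AA G u v * n = 2 * (n * m) := by
    have hh : ∀ u : V, ∑ v : V, AA G u v * n = G.degree u * n := fun u => by
      rw [← Finset.sum_mul, sum_AA]
    rw [Finset.sum_congr rfl fun u _ => hh u, ← Finset.sum_mul,
      SimpleGraph.sum_degrees_eq_twice_card_edges, ← hm]
    ring
  simp only [mul_add, Finset.sum_add_distrib] at hEq1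
  rw [h1, h2, h3] at hEq1
  -- hEq1 : S + S + Na = 2*(n*m) + Cc
  have hCcNa : (∑ u : V, ∑ v : V, AA G u v * aN G u v) + 2
      ≤ ∑ u : V, ∑ v : V, AA G u v * cN G u v := by omega
  -- Step 2: b ≥ 1
  have hb1 : 1 ≤ bk G := by
    by_contra hb0
    have hb : bk G = 0 := by omega
    have hzero : (∑ u : V, ∑ v : V, AA G u v * cN G u v) = 0 := by
      refine Finset.sum_eq_zero fun u _ => Finset.sum_eq_zero fun v _ => ?_
      by_cases hadj : G.Adj u v
      · have := cN_le_bk G hadj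
        simp only [AA, if_pos hadj, one_mul]
        omega
      · simp [AA, hadj]
    omega
  -- Step 3: triple counting
  have htrip : n * (∑ u : V, ∑ v : V, AA G u v * cN G u v)
      ≤ 3 * ∑ u : V, ∑ v : V, AA G u v * (cN G u v * (cN G u v + aN G u v)) := by
    have hpt : ∀ u v w : V, AA G u v * AA G u w * AA G v w * n
        ≤ AA G u v * AA G u w * AA G v w *
          ((cN G u v + aN G u v) + (cN G u w + aN G u w) + (cN G v w + aN G v w)) := fun u v w => by
      refine Nat.mul_le_mul le_rfl ?_
      rw [hn]
      exact key_triple G u v w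
    have hsum : ∑ u : V, ∑ v : V, ∑ w : V, AA G u v * AA G u w * AA G v w * n
        ≤ ∑ u : V, ∑ v : V, ∑ w : V, AA G u v * AA G u w * AA G v w *
          ((cN G u v + aN G u v) + (cN G u w + aN G u w) + (cN G v w + aN G v w)) :=
      Finset.sum_le_sum fun u _ => Finset.sum_le_sum fun v _ => Finset.sum_le_sum fun w _ =>
        hpt u v w
    have hsplit : ∑ u : V, ∑ v : V, ∑ w : V, AA G u v * AA G u w * AA G v w *
          ((cN G u v + aN G u v) + (cN G u w + aN G u w) + (cN G v w + aN G v w))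
        = 3 * ∑ u : V, ∑ v : V, ∑ w : V, AA G u v * AA G u w * AA G v w *
            (cN G u v + aN G u v) := by
      simp only [mul_add, Finset.sum_add_distrib]
      rw [T3_13 G (fun a b => cN G a b), T3_13 G (fun a b => aN G a b),
        T3_23 G (fun a b => cN G a b), T3_23 G (fun a b => aN G a b),
        T3_13 G (fun a b => cN G a b), T3_13 G (fun a b => aN G a b)]
      ring
    have hleft : ∑ u : V, ∑ v : V, ∑ w : V, AA G u v * AA G u w * AA G v w * n
        = n * (∑ u : V, ∑ v : V, AA G u v * cN G u v) := by
      rw [T3_eq, Finset.mul_sum]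
      refine Finset.sum_congr rfl fun u _ => ?_
      rw [Finset.mul_sum]
      exact Finset.sum_congr rfl fun v _ => by ring
    rw [← hleft]
    calc ∑ u : V, ∑ v : V, ∑ w : V, AA G u v * AA G u w * AA G v w * n
        ≤ _ := hsum
      _ = _ := hsplit
      _ = 3 * ∑ u : V, ∑ v : V, AA G u v * (cN G u v * (cN G u v + aN G u v)) := by
          rw [T3_eq G (fun a b => cN G a b + aN G a b)]
  -- Step 4: bound by bk
  have hbd : ∑ u : V, ∑ v : V, AA G u v * (cN G u v * (cN G u v + aN G u v))
      ≤ bk G * (∑ u : V, ∑ v : V, AA G u v * cN G u v)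
        + bk G * (∑ u : V, ∑ v : V, AA G u v * aN G u v) := by
    have hpt : ∀ u v : V, AA G u v * (cN G u v * (cN G u v + aN G u v))
        ≤ bk G * (AA G u v * cN G u v) + bk G * (AA G u v * aN G u v) := fun u v => by
      by_cases hadj : G.Adj u v
      · have hle := cN_le_bk G hadj
        simp only [AA, if_pos hadj, one_mul]
        calc cN G u v * (cN G u v + aN G u v)
            ≤ bk G * (cN G u v + aN G u v) := Nat.mul_le_mul_right _ hle
          _ = bk G * cN G u v + bk G * aN G u v := by ring
      · simp [AA, hadj]
    calc ∑ u : V, ∑ v : V, AA G u v * (cN G u v * (cN G u v + aN G u v))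
        ≤ ∑ u : V, ∑ v : V, (bk G * (AA G u v * cN G u v) + bk G * (AA G u v * aN G u v)) :=
          Finset.sum_le_sum fun u _ => Finset.sum_le_sum fun v _ => hpt u v
      _ = bk G * (∑ u : V, ∑ v : V, AA G u v * cN G u v)
          + bk G * (∑ u : V, ∑ v : V, AA G u v * aN G u v) := by
          rw [Finset.mul_sum, Finset.mul_sum, ← Finset.sum_add_distrib]
          refine Finset.sum_congr rfl fun u _ => ?_
          rw [Finset.mul_sum, Finset.mul_sum, ← Finset.sum_add_distrib]
  -- Step 5: conclude n < 6 * bk G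
  set Cc := ∑ u : V, ∑ v : V, AA G u v * cN G u v with hCcdef
  set Na := ∑ u : V, ∑ v : V, AA G u v * aN G u v with hNadef
  have hmain : n * Cc ≤ 3 * (bk G * Cc + bk G * Na) :=
    le_trans htrip (by omega)
  have hmul : bk G * Na + 2 * bk G ≤ bk G * Cc := by
    calc bk G * Na + 2 * bk G = bk G * (Na + 2) := by ring
      _ ≤ bk G * Cc := Nat.mul_le_mul_left _ hCcNa
  have hfin : n * Cc < 6 * bk G * Cc := by nlinarith [hb1, hmul, hmain]
  have hlt : n < 6 * bk G := Nat.lt_of_mul_lt_mul_right hfin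
  rw [gt_iff_lt, div_lt_iff₀ (by norm_num : (0:ℝ) < 6)]
  have hcast : (n : ℝ) < 6 * (bk G : ℝ) := by exact_mod_cast hlt
  linarith
end

section
/- There exists N such that for every integer n ≥ N and every real number f with 4 < f < n/4, there exists a graph G with n vertices such that every edge of G is contained in a triangle, e(G) > n²/4 − f·n, and bk(G) < n/(2√(2f)). Explicitly, with k = ⌊√(2f)⌋ and n = 2kt + k² + s where 0 ≤ s < 2k, one may take the graph on vertex set A ∪ B₁ ∪ ... ∪ B_k ∪ C₁ ∪ ... ∪ C_k ∪ S with |A| = k², |B_i| = |C_i| = t, |S| = s, every vertex of ∪B_i joined to every vertex of ∪C_i, the vertices of A labelled a_{ij} (i, j ∈ {1,...,k}) with a_{ij} joined to all vertices of B_i ∪ C_j, and S having no edges. -/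
open Finset
open scoped Classical

/-!
Let `k = ⌈√(2f)⌉` and `m = n - k²`. On `k²` vertices `a i j`, a set `B` of `⌈m/2⌉` vertices
and a set `C` of `⌊m/2⌋` vertices, split `B` and `C` by residue mod `k` into classes `B i`,
`C j` of size at most `⌈m/2⌉ / k + 1`; join `B` completely to `C` and `a i j` to `B i ∪ C j`.
For `n ≥ 48` we have `m ≥ 2k`, so no class is empty and every edge lies in a triangle.
The common neighbourhood of an edge is a single class or a single vertex `a i j`, which bounds
the booksize by `⌈m/2⌉ / k + 1 < n / (2k) ≤ n / (2√(2f))`. There are `⌈m/2⌉⌊m/2⌋ + k m`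
edges, and this beats `n²/4 - f n` by at least `m (f + k - k²/2) + k² (4f - k²)/4 - 1/4`,
which is positive because `(k - 1)² ≤ 2f` and `k² < 4f` for `f > 4`.
-/

theorem codegSym_mk {V : Type*} [Fintype V] (G : SimpleGraph V) (u v : V) :
    codegSym G s(u, v) = (G.commonNeighbors u v).ncard :=
  rfl

theorem codegSym_comap_equiv {V W : Type*} [Fintype V] [Fintype W] (e : V ≃ W)
    (G : SimpleGraph W) (u v : V) : codegSym (G.comap e) s(u, v) = codegSym G s(e u, e v) := by
  rw [codegSym_mk, codegSym_mk,
    ← Set.ncard_preimage_of_injective_subset_range e.injective (by simp [e.surjective.range_eq])]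
  rfl

theorem bk_le_of_codegSym_le {V : Type*} [Fintype V] {G : SimpleGraph V} {M : ℕ}
    (h : ∀ u v, G.Adj u v → codegSym G s(u, v) ≤ M) : bk G ≤ M :=
  Finset.sup_le fun p hp => h p.1 p.2 (Finset.mem_filter.1 hp).2

namespace SimpleGraph

variable {I J B C : Type*} {r : B → I} {s : C → J}

variable (r s) in
/-- The vertices `inl (i, j)` are the paper's `a i j`; `B i = r⁻¹' {i}` and `C j = s⁻¹' {j}`. -/
def rowColGraph : SimpleGraph ((I × J) ⊕ (B ⊕ C)) where
  Adj
    | .inl p, .inr (.inl b) | .inr (.inl b), .inl p => r b = p.1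
    | .inl p, .inr (.inr c) | .inr (.inr c), .inl p => s c = p.2
    | .inr (.inl _), .inr (.inr _) | .inr (.inr _), .inr (.inl _) => True
    | _, _ => False
  symm := ⟨by rintro (_ | _ | _) (_ | _ | _) <;> simp⟩
  loopless := ⟨by rintro (_ | _ | _) <;> simp⟩

theorem rowColGraph_exists_common_neighbor (hr : Function.Surjective r)
    (hs : Function.Surjective s) {u v : (I × J) ⊕ (B ⊕ C)} (h : (rowColGraph r s).Adj u v) :
    ∃ w, (rowColGraph r s).Adj u w ∧ (rowColGraph r s).Adj v w := by
  rcases u with ⟨i, j⟩ | b | c <;> rcases v with ⟨i', j'⟩ | b' | c' <;>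
    simp [rowColGraph] at h ⊢ <;> first | exact hr _ | exact hs _

theorem rowColGraph_commonNeighbors_inl_inr_inl {i : I} {j : J} {b : B} (h : r b = i) :
    (rowColGraph r s).commonNeighbors (.inl (i, j)) (.inr (.inl b))
      = (Sum.inr ∘ Sum.inr) '' {c | s c = j} := by
  ext (_ | _ | _) <;> simp [commonNeighbors, rowColGraph, h]

theorem rowColGraph_commonNeighbors_inl_inr_inr {i : I} {j : J} {c : C} (h : s c = j) :
    (rowColGraph r s).commonNeighbors (.inl (i, j)) (.inr (.inr c))
      = (Sum.inr ∘ Sum.inl) '' {b | r b = i} := by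
  ext (_ | _ | _) <;> simp [commonNeighbors, rowColGraph, h]

theorem rowColGraph_commonNeighbors_inr_inl_inr_inr (b : B) (c : C) :
    (rowColGraph r s).commonNeighbors (.inr (.inl b)) (.inr (.inr c)) = {.inl (r b, s c)} := by
  ext (_ | _ | _) <;> simp [commonNeighbors, rowColGraph, eq_comm, Prod.ext_iff]

theorem codegSym_rowColGraph_le [Fintype I] [Fintype J] [Fintype B] [Fintype C] {M : ℕ}
    (hM : 1 ≤ M) (hr : ∀ i, {b | r b = i}.ncard ≤ M) (hs : ∀ j, {c | s c = j}.ncard ≤ M)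
    {u v : (I × J) ⊕ (B ⊕ C)} (h : (rowColGraph r s).Adj u v) :
    codegSym (rowColGraph r s) s(u, v) ≤ M := by
  have hB : (Sum.inr ∘ Sum.inl : B → (I × J) ⊕ (B ⊕ C)).Injective :=
    Sum.inr_injective.comp Sum.inl_injective
  have hC : (Sum.inr ∘ Sum.inr : C → (I × J) ⊕ (B ⊕ C)).Injective :=
    Sum.inr_injective.comp Sum.inr_injective
  rcases u with ⟨i, j⟩ | b | c <;> rcases v with ⟨i', j'⟩ | b' | c' <;>
    simp only [rowColGraph] at h <;> rw [codegSym_mk]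
  · rw [rowColGraph_commonNeighbors_inl_inr_inl h, Set.ncard_image_of_injective _ hC]
    exact hs j
  · rw [rowColGraph_commonNeighbors_inl_inr_inr h, Set.ncard_image_of_injective _ hB]
    exact hr i
  · rw [commonNeighbors_symm, rowColGraph_commonNeighbors_inl_inr_inl h,
      Set.ncard_image_of_injective _ hC]
    exact hs j'
  · rwa [rowColGraph_commonNeighbors_inr_inl_inr_inr, Set.ncard_singleton]
  · rw [commonNeighbors_symm, rowColGraph_commonNeighbors_inl_inr_inr h,
      Set.ncard_image_of_injective _ hB]
    exact hr i'
  · rwa [commonNeighbors_symm, rowColGraph_commonNeighbors_inr_inl_inr_inr, Set.ncard_singleton]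

variable (r s) in
def rowColEdge : (B × C) ⊕ ((B × J) ⊕ (C × I)) → (rowColGraph r s).edgeSet
  | .inl (b, c) => ⟨s(.inr (.inl b), .inr (.inr c)), by simp [rowColGraph]⟩
  | .inr (.inl (b, j)) => ⟨s(.inl (r b, j), .inr (.inl b)), by simp [rowColGraph]⟩
  | .inr (.inr (c, i)) => ⟨s(.inl (i, s c), .inr (.inr c)), by simp [rowColGraph]⟩

theorem rowColEdge_bijective : Function.Bijective (rowColEdge r s) := by
  constructor
  · rintro (⟨b, c⟩ | ⟨b, j⟩ | ⟨c, i⟩) (⟨b', c'⟩ | ⟨b', j'⟩ | ⟨c', i'⟩) h <;>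
      simp_all [rowColEdge, Subtype.ext_iff]
  · rintro ⟨e, he⟩
    induction e using Sym2.ind with | _ x y => ?_
    rcases x with ⟨i, j⟩ | b | c <;> rcases y with ⟨i', j'⟩ | b' | c' <;>
      simp only [rowColGraph, mem_edgeSet] at he
    all_goals subst_vars; simp [rowColEdge, Subtype.ext_iff]

theorem card_edgeFinset_rowColGraph [Fintype I] [Fintype J] [Fintype B] [Fintype C] :
    #(rowColGraph r s).edgeFinset
      = Fintype.card B * Fintype.card C
        + (Fintype.card B * Fintype.card J + Fintype.card C * Fintype.card I) := by
  rw [edgeFinset_card, ← Fintype.card_of_bijective rowColEdge_bijective]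
  simp

end SimpleGraph

theorem ncard_setOf_val_modEq_le (β k i : ℕ) (hk : 0 < k) :
    {b : Fin β | (b : ℕ) ≡ i [MOD k]}.ncard ≤ β / k + 1 := by
  rw [Set.ncard_eq_toFinset_card', Set.toFinset_ofPred]
  calc #{b : Fin β | (b : ℕ) ≡ i [MOD k]}
      ≤ #{x ∈ range β | x ≡ i [MOD k]} :=
        card_le_card_of_injOn Fin.val (fun b hb => by simp_all) Fin.val_injective.injOn
    _ = β / k + if i % k < β % k then 1 else 0 := by
        rw [← Nat.count_eq_card_filter_range, Nat.count_modEq_card _ hk]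
    _ ≤ β / k + 1 := by split_ifs <;> omega

theorem ncard_setOf_ofNat_eq_le (β k : ℕ) [NeZero k] (i : Fin k) :
    {b : Fin β | Fin.ofNat k b = i}.ncard ≤ β / k + 1 := by
  convert ncard_setOf_val_modEq_le β k i (Nat.pos_of_neZero k) using 3
  simp [Fin.ext_iff, Nat.ModEq, Nat.mod_eq_of_lt i.isLt]

open SimpleGraph in
theorem exists_fin_graph_bk_le (k β γ n : ℕ) [NeZero k] (hkγ : k ≤ γ) (hγβ : γ ≤ β)
    (hn : k * k + (β + γ) = n) :
    ∃ G : SimpleGraph (Fin n), (∀ u v, G.Adj u v → ∃ w, G.Adj u w ∧ G.Adj v w) ∧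
      #G.edgeFinset = β * γ + (β * k + γ * k) ∧ bk G ≤ β / k + 1 := by
  have surj {m : ℕ} (hm : k ≤ m) : Function.Surjective fun b : Fin m => Fin.ofNat k b :=
    fun i => ⟨⟨i, i.isLt.trans_le hm⟩, Fin.ofNat_val_eq_self i⟩
  let H := rowColGraph (fun b : Fin β => Fin.ofNat k b) (fun c : Fin γ => Fin.ofNat k c)
  let e : Fin n ≃ (Fin k × Fin k) ⊕ (Fin β ⊕ Fin γ) :=
    (Fintype.equivFinOfCardEq (by simp [hn])).symm
  refine ⟨H.comap e, fun u v h => ?_, ?_, bk_le_of_codegSym_le fun u v h => ?_⟩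
  · obtain ⟨w, hw⟩ := rowColGraph_exists_common_neighbor (surj (hkγ.trans hγβ)) (surj hkγ) h
    exact ⟨e.symm w, by simpa only [comap_adj, e.apply_symm_apply]⟩
  · convert (Iso.comap e H).card_edgeFinset_eq.trans card_edgeFinset_rowColGraph using 2 <;> simp
  · rw [codegSym_comap_equiv]
    exact codegSym_rowColGraph_le (Nat.le_add_left 1 _) (ncard_setOf_ofNat_eq_le β k)
      (fun j => (ncard_setOf_ofNat_eq_le γ k j).trans (by gcongr)) h

theorem sq_add_two_mul_le {x k n : ℝ} (hk : 0 ≤ k) (hkx : k < x + 1) (hn : 2 * x ^ 2 < n)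
    (h48 : 48 ≤ n) : k ^ 2 + 2 * k ≤ n := by
  have : k ^ 2 + 2 * k < x ^ 2 + 4 * x + 3 := by nlinarith
  rcases le_or_gt x 5 with h | h <;> nlinarith

theorem sq_div_four_sub_mul_lt {f x k b c : ℝ} (hf : 4 < f) (hx : x ^ 2 = 2 * f) (hx0 : 0 < x)
    (hxk : x ≤ k) (hkx : k < x + 1) (hcb : c ≤ b) (hbc : b ≤ c + 1)
    (hn : 4 * f < k ^ 2 + b + c) :
    (k ^ 2 + b + c) ^ 2 / 4 - f * (k ^ 2 + b + c) < b * c + (b * k + c * k) := by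
  have hx1 : 1 < x := by nlinarith
  have hbc4 : (b + c) ^ 2 ≤ 4 * (b * c) + 1 := by nlinarith
  have hslope : 1 / 2 ≤ f + k - k ^ 2 / 2 := by
    nlinarith [mul_self_le_mul_self (by linarith : (0 : ℝ) ≤ k - 1) (by linarith : k - 1 ≤ x)]
  have hgap : 1 ≤ 4 * f - k ^ 2 := by nlinarith
  nlinarith

theorem add_one_mul_two_mul_lt {x k b c q : ℝ} (hxk : x ≤ k) (hk : 3 ≤ k) (hq0 : 0 ≤ q)
    (hq : q * k ≤ b) (hbc : b ≤ c + 1) : (q + 1) * (2 * x) < k ^ 2 + b + c := by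
  nlinarith

theorem stmt16 : ∃ N : ℕ, ∀ n : ℕ, N ≤ n → ∀ f : ℝ, 4 < f → f < n / 4 →
    ∃ G : SimpleGraph (Fin n),
      (∀ u v : Fin n, G.Adj u v → ∃ w : Fin n, G.Adj u w ∧ G.Adj v w) ∧
      ((G.edgeFinset.card : ℝ) > (n : ℝ) ^ 2 / 4 - f * n) ∧
      ((bk G : ℝ) < n / (2 * Real.sqrt (2 * f))) := by
  refine ⟨48, fun n hn f hf hfn => ?_⟩
  set x := Real.sqrt (2 * f)
  have hx : x ^ 2 = 2 * f := Real.sq_sqrt (by linarith)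
  have hx0 : 0 < x := Real.sqrt_pos.2 (by linarith)
  set k := ⌈x⌉₊
  have hxk : x ≤ k := Nat.le_ceil x
  have hkx : (k : ℝ) < x + 1 := Nat.ceil_lt_add_one hx0.le
  have hk3 : 3 ≤ k := Nat.lt_ceil.2 (by push_cast; nlinarith)
  have : NeZero k := ⟨by omega⟩
  have hkn : k * k + 2 * k ≤ n := by
    have := sq_add_two_mul_le (n := n) (Nat.cast_nonneg k) hkx (by linarith) (by exact_mod_cast hn)
    exact_mod_cast (by push_cast; linarith : ((k * k + 2 * k : ℕ) : ℝ) ≤ n)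
  set β := (n - k * k + 1) / 2
  set γ := (n - k * k) / 2
  have hsplit : k * k + (β + γ) = n := by omega
  obtain ⟨G, hG, hedges, hbk⟩ := exists_fin_graph_bk_le k β γ n (by omega) (by omega) hsplit
  have hn' : (n : ℝ) = k ^ 2 + β + γ := by rw [← hsplit]; push_cast; ring
  refine ⟨G, hG, ?_, ?_⟩
  · rw [hedges, hn']
    push_cast
    exact sq_div_four_sub_mul_lt hf hx hx0 hxk hkx (by exact_mod_cast (by omega : γ ≤ β))
      (by exact_mod_cast (by omega : β ≤ γ + 1)) (by linarith)
  · rw [lt_div_iff₀ (by positivity), hn']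
    calc (bk G : ℝ) * (2 * x) ≤ ((β / k : ℕ) + 1) * (2 * x) := by gcongr; exact_mod_cast hbk
      _ < k ^ 2 + β + γ :=
        add_one_mul_two_mul_lt hxk (by exact_mod_cast hk3) (Nat.cast_nonneg _)
          (by exact_mod_cast Nat.div_mul_le_self β k) (by exact_mod_cast (by omega : β ≤ γ + 1))
end
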